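/- arXiv:1205.6974 — 6 statements merged into one kernel-verified Lean document; each statement's English description precedes it below -/
import Mathlib

section
/- Let X = (X_1, X_2, …) be an iid Bernoulli(1/2) binary process, and let L be a random positive integer with an arbitrary conditional distribution given X (i.e., L may depend on the entire sequence X). Then the Shannon entropy (base 2) of the random finite binary string X^L = (X_1, …, X_L), viewed as a random element of the set of finite binary strings, satisfies H(X^L) ≥ E[L] (both sides possibly infinite). -/
open MeasureTheory ProbabilityTheory
open scoped ENNReal

/-!
The event `X^L = w` forces the first `|w|` fair independent bits to spell `w`, so it has
probability at most `2^{-|w|}`, i.e. `-log₂ P(X^L = w) ≥ |w|`. Since `L = |X^L|`, computing `E[L]`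
over the countable partition of the sample space by the value of `X^L` gives
`E[L] = Σ_w P(X^L = w) |w| ≤ Σ_w P(X^L = w) (-log₂ P(X^L = w)) = H(X^L)`.
-/

theorem List.ofFn_comp_val_eq_iff {α : Type*} (g : ℕ → α) (n : ℕ) (w : List α) (d : α) :
    List.ofFn (fun j : Fin n => g j) = w ↔ n = w.length ∧ ∀ i < w.length, g i = w.getD i d := by
  constructor
  · rintro rfl
    refine ⟨(List.length_ofFn).symm, fun i hi => ?_⟩
    rw [List.getD_eq_getElem _ _ hi, List.getElem_ofFn]
  · rintro ⟨rfl, hg⟩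
    refine List.ext_getElem List.length_ofFn fun i _ hi => ?_
    rw [List.getElem_ofFn, hg i hi, List.getD_eq_getElem _ _ hi]

section Probability

variable {Ω : Type*} [MeasurableSpace Ω] (μ : Measure Ω)

theorem lintegral_comp_eq_tsum_measure_preimage {α : Type*} [Countable α] {W : Ω → α}
    (hW : ∀ a, MeasurableSet (W ⁻¹' {a})) (f : α → ℝ≥0∞) :
    ∫⁻ ω, f (W ω) ∂μ = ∑' a, μ (W ⁻¹' {a}) * f a := by
  have hdisj : Pairwise (Function.onFun Disjoint fun a => W ⁻¹' {a}) :=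
    fun a b hab => (Set.disjoint_singleton.2 hab).preimage W
  rw [← setLIntegral_univ, ← Set.preimage_univ (f := W), ← Set.iUnion_of_singleton α,
    Set.preimage_iUnion, lintegral_iUnion hW hdisj]
  refine tsum_congr fun a => ?_
  rw [setLIntegral_congr_fun (hW a) fun ω (hω : W ω = a) => by rw [hω], setLIntegral_const,
    mul_comm]

theorem measure_eq_half_of_measure_eq_true_half [IsProbabilityMeasure μ] {f : Ω → Bool}
    (hf : Measurable f) (htrue : μ {ω | f ω = true} = 1 / 2) (b : Bool) :
    μ {ω | f ω = b} = 1 / 2 := by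
  cases b
  · have hcompl : {ω | f ω = false} = {ω | f ω = true}ᶜ := by ext ω; simp
    rw [hcompl, prob_compl_eq_one_sub (s := {ω | f ω = true}) (hf (measurableSet_singleton true)),
      htrue, ENNReal.sub_half ENNReal.one_ne_top]
  · exact htrue

theorem ProbabilityTheory.iIndepFun.measure_biInter_eq_half_pow {ι : Type*} {X : ι → Ω → Bool}
    (hindep : iIndepFun X μ) (hfair : ∀ i b, μ {ω | X i ω = b} = 1 / 2)
    (s : Finset ι) (b : ι → Bool) :
    μ (⋂ i ∈ s, {ω | X i ω = b i}) = (1 / 2) ^ s.card := by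
  rw [hindep.meas_biInter (s := fun i => {ω | X i ω = b i})
      fun i _ => ⟨{b i}, measurableSet_singleton _, rfl⟩,
    Finset.prod_congr rfl fun i _ => hfair i (b i), Finset.prod_const]

end Probability

theorem mul_natCast_le_mul_ofReal_neg_logb_two {p : ℝ≥0∞} {n : ℕ} (hp : p ≤ (1 / 2) ^ n) :
    p * n ≤ p * ENNReal.ofReal (-Real.logb 2 p.toReal) := by
  rcases eq_or_ne p 0 with rfl | hp0
  · simp
  refine mul_le_mul_right ?_ _
  have hp_real : p.toReal ≤ (1 / 2 : ℝ) ^ n := by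
    simpa [ENNReal.toReal_pow] using ENNReal.toReal_mono (by simp) hp
  have hp_pos : 0 < p.toReal := ENNReal.toReal_pos hp0 (ne_top_of_le_ne_top (by simp) hp)
  have hlog : Real.logb 2 p.toReal ≤ -n := by
    calc Real.logb 2 p.toReal ≤ Real.logb 2 ((1 / 2 : ℝ) ^ n) :=
          Real.logb_le_logb_of_le one_lt_two hp_pos hp_real
      _ = -n := by
          rw [Real.logb_pow, one_div, Real.logb_inv, Real.logb_self_eq_one one_lt_two]
          ring
  rw [← ENNReal.ofReal_natCast]
  exact ENNReal.ofReal_le_ofReal (by linarith)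

theorem selection_lemma_general
    {Ω : Type*} [MeasurableSpace Ω] (μ : Measure Ω) [IsProbabilityMeasure μ]
    (X : ℕ → Ω → Bool) (hXmeas : ∀ i, Measurable (X i))
    (hXindep : iIndepFun X μ)
    (hXbern : ∀ i, μ {ω | X i ω = true} = 1/2)
    (L : Ω → ℕ) (hLmeas : Measurable L) :
    (∫⁻ ω, (L ω : ℝ≥0∞) ∂μ) ≤
      ∑' w : List Bool,
        μ {ω | List.ofFn (fun j : Fin (L ω) => X (j : ℕ) ω) = w} *
          ENNReal.ofReal
            (- Real.logb 2
              (μ {ω | List.ofFn (fun j : Fin (L ω) => X (j : ℕ) ω) = w}).toReal) := by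
  set W : Ω → List Bool := fun ω => List.ofFn fun j : Fin (L ω) => X j ω
  have hfiber : ∀ w, W ⁻¹' {w} = {ω | L ω = w.length} ∩
      ⋂ i ∈ Finset.range w.length, {ω | X i ω = w.getD i false} := fun w => by
    ext ω
    simp only [Set.mem_preimage, Set.mem_singleton_iff, Set.mem_inter_iff, Set.mem_ofPred_eq,
      Set.mem_iInter, Finset.mem_range]
    exact List.ofFn_comp_val_eq_iff (X · ω) (L ω) w false
  have hfiber_meas : ∀ w, MeasurableSet (W ⁻¹' {w}) := fun w => by
    rw [hfiber]
    exact (hLmeas (measurableSet_singleton _)).inter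
      (Finset.measurableSet_biInter _ fun i _ => hXmeas i (measurableSet_singleton _))
  have hfair : ∀ i b, μ {ω | X i ω = b} = 1 / 2 := fun i =>
    measure_eq_half_of_measure_eq_true_half μ (hXmeas i) (hXbern i)
  have hfiber_le : ∀ w, μ (W ⁻¹' {w}) ≤ (1 / 2) ^ w.length := fun w => by
    calc μ (W ⁻¹' {w}) ≤ μ (⋂ i ∈ Finset.range w.length, {ω | X i ω = w.getD i false}) :=
          hfiber w ▸ measure_mono Set.inter_subset_right
      _ = (1 / 2) ^ w.length := by
          rw [hXindep.measure_biInter_eq_half_pow μ hfair, Finset.card_range]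
  calc ∫⁻ ω, (L ω : ℝ≥0∞) ∂μ = ∫⁻ ω, ((W ω).length : ℝ≥0∞) ∂μ := by simp [W]
    _ = ∑' w, μ (W ⁻¹' {w}) * w.length :=
        lintegral_comp_eq_tsum_measure_preimage μ hfiber_meas fun w => w.length
    _ ≤ _ := ENNReal.tsum_le_tsum fun w => mul_natCast_le_mul_ofReal_neg_logb_two (hfiber_le w)

/-- The paper's Selection Lemma (Lemma 2): if `X` is an iid Bernoulli(1/2) binary process
and `L` is an arbitrary random positive integer (possibly depending on the whole sequence),
then the Shannon entropy (base 2) of the random finite string `X^L = (X_1, …, X_L)`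
is at least `E[L]` (both sides possibly infinite). -/
theorem selection_lemma
    {Ω : Type*} [MeasurableSpace Ω] (μ : Measure Ω) [IsProbabilityMeasure μ]
    (X : ℕ → Ω → Bool) (hXmeas : ∀ i, Measurable (X i))
    (hXindep : iIndepFun X μ)
    (hXbern : ∀ i, μ {ω | X i ω = true} = 1/2)
    (L : Ω → ℕ) (hLmeas : Measurable L) (hLpos : ∀ ω, 1 ≤ L ω) :
    (∫⁻ ω, (L ω : ℝ≥0∞) ∂μ) ≤
      ∑' w : List Bool,
        μ {ω | List.ofFn (fun j : Fin (L ω) => X (j : ℕ) ω) = w} *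
          ENNReal.ofReal
            (- Real.logb 2
              (μ {ω | List.ofFn (fun j : Fin (L ω) => X (j : ℕ) ω) = w}).toReal) :=
  selection_lemma_general μ X hXmeas hXindep hXbern L hLmeas
end

section
/- Suppose {X_i}_{i≥1} is a sequence of iid Bernoulli(p) random variables and {α_i}_{i≥1} is a bounded sequence of real numbers. Then with probability one, limsup_{n→∞} (1/n) Σ_{i=1}^n α_i X_i = p · limsup_{n→∞} (1/n) Σ_{i=1}^n α_i, and liminf_{n→∞} (1/n) Σ_{i=1}^n α_i X_i = p · liminf_{n→∞} (1/n) Σ_{i=1}^n α_i. -/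
/-! The centred variables `Y i = α i * (1{X i} - p)` are independent, mean zero and bounded by
`sup |α|`, and the weighted average splits as `p * (average of α) + (average of Y)`.
Chebyshev gives `P(|Y 0 + ⋯ + Y (n-1)| ≥ n ε) ≤ C / (n ε²)`, which is summable along the squares
`n = m²`, so by Borel–Cantelli the averages of `Y` tend to `0` a.s. along the squares; since `Y`
is bounded, the partial sums move by only `O(m)` between `m²` and `(m+1)²`. Finally, adding a null
sequence changes neither the limsup nor the liminf of a bounded sequence. -/

open MeasureTheory ProbabilityTheory Filter Finset Topology
open scoped ENNReal

section LimsupAdd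

variable {ι α : Type*} [AddCommGroup α] [ConditionallyCompleteLinearOrder α] [DenselyOrdered α]
  [AddLeftMono α] [TopologicalSpace α] [OrderTopology α] {f : Filter ι} [f.NeBot] {u v : ι → α}

lemma limsup_add_of_right_tendsto_zero (hu : IsBoundedUnder (· ≤ ·) f u)
    (hu' : IsBoundedUnder (· ≥ ·) f u) (hv : Tendsto v f (𝓝 0)) :
    limsup (u + v) f = limsup u f := by
  apply le_antisymm
  · simpa [hv.limsup_eq] using limsup_add_le hu' hu hv.isBoundedUnder_ge.isCoboundedUnder_le
      hv.isBoundedUnder_le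
  · simpa [hv.liminf_eq] using le_limsup_add hu hu'.isCoboundedUnder_le hv.isBoundedUnder_le
      hv.isBoundedUnder_ge

lemma liminf_add_of_right_tendsto_zero (hu : IsBoundedUnder (· ≤ ·) f u)
    (hu' : IsBoundedUnder (· ≥ ·) f u) (hv : Tendsto v f (𝓝 0)) :
    liminf (u + v) f = liminf u f := by
  apply le_antisymm
  · simpa [hv.limsup_eq, add_comm] using liminf_add_le hv.isBoundedUnder_ge hv.isBoundedUnder_le
      hu' hu.isCoboundedUnder_ge
  · simpa [hv.liminf_eq] using le_liminf_add hu' hu hv.isBoundedUnder_ge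
      hv.isBoundedUnder_le.isCoboundedUnder_ge

end LimsupAdd

section LimsupMulAdd

variable {ι : Type*} {f : Filter ι} [f.NeBot] {u v : ι → ℝ} {c : ℝ}

lemma Real.limsup_const_mul_add_of_tendsto_zero (hc : 0 ≤ c) (hu : IsBoundedUnder (· ≤ ·) f u)
    (hu' : IsBoundedUnder (· ≥ ·) f u) (hv : Tendsto v f (𝓝 0)) :
    limsup (fun i => c * u i + v i) f = c * limsup u f := by
  have hmono : Monotone (c * ·) := monotone_mul_left_of_nonneg hc
  rw [hmono.map_limsup_of_continuousAt u (continuous_const_mul c).continuousAt hu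
    hu'.isCoboundedUnder_le]
  exact limsup_add_of_right_tendsto_zero (hmono.isBoundedUnder_le_comp hu)
    (hmono.isBoundedUnder_ge_comp hu') hv

lemma Real.liminf_const_mul_add_of_tendsto_zero (hc : 0 ≤ c) (hu : IsBoundedUnder (· ≤ ·) f u)
    (hu' : IsBoundedUnder (· ≥ ·) f u) (hv : Tendsto v f (𝓝 0)) :
    liminf (fun i => c * u i + v i) f = c * liminf u f := by
  have hmono : Monotone (c * ·) := monotone_mul_left_of_nonneg hc
  rw [hmono.map_liminf_of_continuousAt u (continuous_const_mul c).continuousAt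
    hu.isCoboundedUnder_ge hu']
  exact liminf_add_of_right_tendsto_zero (hmono.isBoundedUnder_le_comp hu)
    (hmono.isBoundedUnder_ge_comp hu') hv

end LimsupMulAdd

lemma abs_sum_Ico_le_of_abs_le {Y : ℕ → ℝ} {A : ℝ} (hY : ∀ i, |Y i| ≤ A) (k n : ℕ) :
    |∑ i ∈ Ico k n, Y i| ≤ (n - k : ℕ) * A := by
  calc |∑ i ∈ Ico k n, Y i| ≤ ∑ i ∈ Ico k n, |Y i| := abs_sum_le_sum_abs _ _
    _ ≤ (Ico k n).card • A := sum_le_card_nsmul _ _ _ fun i _ => hY i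
    _ = (n - k : ℕ) * A := by simp

lemma abs_one_div_mul_sum_range_le {Y : ℕ → ℝ} {A : ℝ} (hY : ∀ i, |Y i| ≤ A) (n : ℕ) :
    |1 / (n : ℝ) * ∑ i ∈ range n, Y i| ≤ A := by
  rcases n.eq_zero_or_pos with rfl | hn
  · simpa using (abs_nonneg _).trans (hY 0)
  · have hsum := abs_sum_Ico_le_of_abs_le hY 0 n
    rw [← range_eq_Ico, Nat.sub_zero] at hsum
    rw [one_div_mul_eq_div, abs_div, Nat.abs_cast, div_le_iff₀ (by positivity)]
    linarith

lemma tendsto_sum_range_div_of_tendsto_sq {Y : ℕ → ℝ} {A : ℝ} (hY : ∀ i, |Y i| ≤ A)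
    (h : Tendsto (fun m : ℕ => (∑ i ∈ range (m ^ 2), Y i) / (m : ℝ) ^ 2) atTop (𝓝 0)) :
    Tendsto (fun n : ℕ => (∑ i ∈ range n, Y i) / n) atTop (𝓝 0) := by
  have hsqrt : Tendsto Nat.sqrt atTop atTop :=
    tendsto_atTop_atTop.2 fun b => ⟨b * b, fun n hn => Nat.le_sqrt.2 hn⟩
  have hbound : Tendsto (fun m : ℕ => |(∑ i ∈ range (m ^ 2), Y i) / (m : ℝ) ^ 2| + 2 * A / m)
      atTop (𝓝 0) := by
    simpa using h.abs.add (tendsto_const_div_atTop_nhds_zero_nat (2 * A))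
  refine squeeze_zero_norm' ?_ (hbound.comp hsqrt)
  filter_upwards [eventually_ge_atTop 1] with n hn
  set m := n.sqrt
  have hm : 0 < m := Nat.sqrt_pos.2 hn
  have hmn : m ^ 2 ≤ n := by simpa [sq] using Nat.sqrt_le' n
  have hnm : n - m ^ 2 ≤ 2 * m := by
    have h1 : n < (m + 1) ^ 2 := Nat.lt_succ_sqrt' n
    have h2 : (m + 1) ^ 2 = m ^ 2 + 2 * m + 1 := by ring
    omega
  have hA : 0 ≤ A := (abs_nonneg _).trans (hY 0)
  have htail : |∑ i ∈ Ico (m ^ 2) n, Y i| ≤ 2 * m * A := by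
    refine (abs_sum_Ico_le_of_abs_le hY _ _).trans (mul_le_mul_of_nonneg_right ?_ hA)
    exact_mod_cast hnm
  have hm2 : (0 : ℝ) < (m : ℝ) ^ 2 := by positivity
  have hmn' : (m : ℝ) ^ 2 ≤ n := by exact_mod_cast hmn
  rw [Real.norm_eq_abs, abs_div, Nat.abs_cast, ← sum_range_add_sum_Ico _ hmn]
  calc |∑ i ∈ range (m ^ 2), Y i + ∑ i ∈ Ico (m ^ 2) n, Y i| / n
      ≤ (|∑ i ∈ range (m ^ 2), Y i| + 2 * m * A) / n := by
        gcongr; exact (abs_add_le _ _).trans (by gcongr)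
    _ ≤ (|∑ i ∈ range (m ^ 2), Y i| + 2 * m * A) / (m : ℝ) ^ 2 := by gcongr
    _ = |(∑ i ∈ range (m ^ 2), Y i) / (m : ℝ) ^ 2| + 2 * A / m := by
        rw [abs_div, abs_of_pos hm2]; field_simp

section ChebyshevAlongSquares

variable {Ω : Type*} [MeasurableSpace Ω] {μ : Measure Ω} {Y : ℕ → Ω → ℝ} {C : ℝ}

lemma variance_sum_range_le (hL2 : ∀ i, MemLp (Y i) 2 μ)
    (hindep : Pairwise fun i j => IndepFun (Y i) (Y j) μ) (hvar : ∀ i, variance (Y i) μ ≤ C)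
    (n : ℕ) : variance (∑ i ∈ range n, Y i) μ ≤ n * C := by
  rw [IndepFun.variance_sum (fun i _ => hL2 i) fun i _ j _ hij => hindep hij]
  exact (sum_le_card_nsmul (range n) _ C fun i _ => hvar i).trans_eq (by simp)

variable [IsFiniteMeasure μ]

lemma measure_mul_le_abs_sum_range_le (hL2 : ∀ i, MemLp (Y i) 2 μ)
    (hindep : Pairwise fun i j => IndepFun (Y i) (Y j) μ) (hmean : ∀ i, μ[Y i] = 0)
    (hvar : ∀ i, variance (Y i) μ ≤ C) {n : ℕ} (hn : 0 < n) {ε : ℝ} (hε : 0 < ε) :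
    μ {ω | n * ε ≤ |∑ i ∈ range n, Y i ω|} ≤ ENNReal.ofReal (C / (n * ε ^ 2)) := by
  have hS : MemLp (∑ i ∈ range n, Y i) 2 μ := memLp_finsetSum' _ fun i _ => hL2 i
  have hmeanS : ∫ ω, ∑ i ∈ range n, Y i ω ∂μ = 0 := by
    rw [integral_finsetSum _ fun i _ => (hL2 i).integrable one_le_two]
    simp [hmean]
  have hcheb := meas_ge_le_variance_div_sq hS (by positivity : (0 : ℝ) < n * ε)
  simp only [Finset.sum_apply, hmeanS, sub_zero] at hcheb
  refine hcheb.trans (ENNReal.ofReal_le_ofReal ?_)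
  calc variance (∑ i ∈ range n, Y i) μ / (n * ε) ^ 2 ≤ n * C / (n * ε) ^ 2 := by
        gcongr; exact variance_sum_range_le hL2 hindep hvar n
    _ = C / (n * ε ^ 2) := by field_simp

lemma ae_eventually_abs_sum_range_succ_sq_lt (hL2 : ∀ i, MemLp (Y i) 2 μ)
    (hindep : Pairwise fun i j => IndepFun (Y i) (Y j) μ) (hmean : ∀ i, μ[Y i] = 0)
    (hvar : ∀ i, variance (Y i) μ ≤ C) {ε : ℝ} (hε : 0 < ε) :
    ∀ᵐ ω ∂μ, ∀ᶠ m : ℕ in atTop,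
      |∑ i ∈ range ((m + 1) ^ 2), Y i ω| < ((m + 1) ^ 2 : ℕ) * ε := by
  have hC : 0 ≤ C := (variance_nonneg _ _).trans (hvar 0)
  have hsum : Summable fun m : ℕ => C / (((m + 1) ^ 2 : ℕ) * ε ^ 2) := by
    refine (((summable_nat_add_iff 1).2 (Real.summable_one_div_nat_pow.2 one_lt_two)).mul_left
      (C / ε ^ 2)).congr fun m => ?_
    push_cast
    field_simp
  have htsum : ∑' m : ℕ, μ {ω | ((m + 1) ^ 2 : ℕ) * ε ≤ |∑ i ∈ range ((m + 1) ^ 2), Y i ω|}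
      ≠ ∞ := by
    refine ne_top_of_le_ne_top ?_ (ENNReal.tsum_le_tsum fun m =>
      measure_mul_le_abs_sum_range_le hL2 hindep hmean hvar (by positivity) hε)
    rw [← ENNReal.ofReal_tsum_of_nonneg (fun m => by positivity) hsum]
    exact ENNReal.ofReal_ne_top
  filter_upwards [ae_eventually_notMem htsum] with ω hω
  filter_upwards [hω] with m hm
  simpa using hm

theorem ae_tendsto_sum_range_sq_div (hL2 : ∀ i, MemLp (Y i) 2 μ)
    (hindep : Pairwise fun i j => IndepFun (Y i) (Y j) μ) (hmean : ∀ i, μ[Y i] = 0)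
    (hvar : ∀ i, variance (Y i) μ ≤ C) :
    ∀ᵐ ω ∂μ, Tendsto (fun m : ℕ => (∑ i ∈ range (m ^ 2), Y i ω) / (m : ℝ) ^ 2) atTop (𝓝 0) := by
  have hae := ae_all_iff.2 fun k : ℕ =>
    ae_eventually_abs_sum_range_succ_sq_lt hL2 hindep hmean hvar (Nat.one_div_pos_of_nat (n := k))
  filter_upwards [hae] with ω hω
  rw [← tendsto_add_atTop_iff_nat 1, Metric.tendsto_nhds]
  intro ε hε
  obtain ⟨k, hk⟩ := exists_nat_one_div_lt hε
  filter_upwards [hω k] with m hm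
  have hm2 : (0 : ℝ) < ((m + 1 : ℕ) : ℝ) ^ 2 := by positivity
  rw [Real.dist_eq, sub_zero, abs_div, abs_of_pos hm2, div_lt_iff₀ hm2]
  push_cast at hm ⊢
  calc _ < ((m : ℝ) + 1) ^ 2 * (1 / ((k : ℝ) + 1)) := hm
    _ ≤ ε * ((m : ℝ) + 1) ^ 2 := by rw [mul_comm]; gcongr

theorem ae_tendsto_sum_range_div_of_abs_le [IsProbabilityMeasure μ] {A : ℝ}
    (hmeas : ∀ i, AEStronglyMeasurable (Y i) μ)
    (hindep : Pairwise fun i j => IndepFun (Y i) (Y j) μ) (hmean : ∀ i, μ[Y i] = 0)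
    (hbd : ∀ i ω, |Y i ω| ≤ A) :
    ∀ᵐ ω ∂μ, Tendsto (fun n : ℕ => (∑ i ∈ range n, Y i ω) / n) atTop (𝓝 0) := by
  have hL2 i : MemLp (Y i) 2 μ := MemLp.of_bound (hmeas i) A (ae_of_all _ (hbd i))
  have hvar i : variance (Y i) μ ≤ A ^ 2 := by
    simpa using variance_le_sq_of_bounded (ae_of_all μ fun ω => abs_le.1 (hbd i ω))
      (hmeas i).aemeasurable
  filter_upwards [ae_tendsto_sum_range_sq_div hL2 hindep hmean hvar] with ω hω
  exact tendsto_sum_range_div_of_tendsto_sq (fun i => hbd i ω) hω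

end ChebyshevAlongSquares

lemma ite_eq_true_one_zero_eq_indicator {Ω : Type*} (X : Ω → Bool) :
    (fun ω => if X ω = true then (1 : ℝ) else 0) = {ω | X ω = true}.indicator 1 := by
  ext ω
  simp [Set.indicator_apply]

lemma abs_ite_sub_le_one {p : ℝ} (hp0 : 0 ≤ p) (hp1 : p ≤ 1) (b : Bool) :
    |(if b = true then (1 : ℝ) else 0) - p| ≤ 1 := by
  rw [abs_le]; split_ifs <;> constructor <;> linarith

theorem ae_tendsto_weighted_centered_bernoulli {Ω : Type*} [MeasurableSpace Ω] {μ : Measure Ω}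
    [IsProbabilityMeasure μ] {p : ℝ} (hp0 : 0 ≤ p) (hp1 : p ≤ 1) {X : ℕ → Ω → Bool}
    (hXmeas : ∀ i, Measurable (X i)) (hXindep : iIndepFun X μ)
    (hXbern : ∀ i, μ {ω | X i ω = true} = ENNReal.ofReal p) {α : ℕ → ℝ} {A : ℝ}
    (hA : ∀ i, |α i| ≤ A) :
    ∀ᵐ ω ∂μ, Tendsto (fun n : ℕ =>
      (∑ i ∈ range n, α i * ((if X i ω = true then (1 : ℝ) else 0) - p)) / n) atTop (𝓝 0) := by
  set g : ℕ → Bool → ℝ := fun i b => α i * ((if b = true then 1 else 0) - p)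
  have hg : ∀ i, Measurable (g i) := fun i => measurable_of_countable _
  refine ae_tendsto_sum_range_div_of_abs_le (Y := fun i => g i ∘ X i) (A := A)
    (fun i => ((hg i).comp (hXmeas i)).aestronglyMeasurable)
    (fun i j hij => (hXindep.comp g hg).indepFun hij) (fun i => ?_) (fun i ω => ?_)
  · have hset : MeasurableSet {ω | X i ω = true} := hXmeas i (measurableSet_singleton true)
    have hint : Integrable (fun ω => if X i ω = true then (1 : ℝ) else 0) μ := by
      rw [ite_eq_true_one_zero_eq_indicator]
      exact (integrable_const 1).indicator hset
    simp only [g, Function.comp_apply, mul_sub]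
    rw [integral_sub (hint.const_mul _) (integrable_const _), integral_const_mul,
      ite_eq_true_one_zero_eq_indicator, integral_indicator_one hset, measureReal_def, hXbern i,
      ENNReal.toReal_ofReal hp0]
    simp
  · calc |g i (X i ω)| = |α i| * |(if X i ω = true then (1 : ℝ) else 0) - p| := abs_mul _ _
      _ ≤ A * 1 := mul_le_mul (hA i) (abs_ite_sub_le_one hp0 hp1 _) (abs_nonneg _)
          ((abs_nonneg _).trans (hA i))
      _ = A := mul_one A

/-- The paper's Lemma 8: for an iid Bernoulli(p) process `X` and a bounded real
sequence `α`, almost surely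
`limsup (1/n) ∑_{i<n} α i X i = p * limsup (1/n) ∑_{i<n} α i` and likewise
for the liminf. -/
theorem weighted_strong_law
    {Ω : Type*} [MeasurableSpace Ω] (μ : Measure Ω) [IsProbabilityMeasure μ]
    (p : ℝ) (hp0 : 0 ≤ p) (hp1 : p ≤ 1)
    (X : ℕ → Ω → Bool) (hXmeas : ∀ i, Measurable (X i))
    (hXindep : iIndepFun X μ)
    (hXbern : ∀ i, μ {ω | X i ω = true} = ENNReal.ofReal p)
    (α : ℕ → ℝ) (hαbd : ∃ A, ∀ i, |α i| ≤ A) :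
    ∀ᵐ ω ∂μ,
      (Filter.limsup
          (fun n : ℕ => (1 / (n : ℝ)) * ∑ i ∈ Finset.range n,
            α i * (if X i ω = true then (1 : ℝ) else 0)) atTop
        = p * Filter.limsup
            (fun n : ℕ => (1 / (n : ℝ)) * ∑ i ∈ Finset.range n, α i) atTop)
      ∧ (Filter.liminf
          (fun n : ℕ => (1 / (n : ℝ)) * ∑ i ∈ Finset.range n,
            α i * (if X i ω = true then (1 : ℝ) else 0)) atTop
        = p * Filter.liminf
            (fun n : ℕ => (1 / (n : ℝ)) * ∑ i ∈ Finset.range n, α i) atTop) := by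
  obtain ⟨A, hA⟩ := hαbd
  have havg := abs_one_div_mul_sum_range_le hA
  have hbdd : IsBoundedUnder (· ≤ ·) atTop fun n : ℕ => 1 / (n : ℝ) * ∑ i ∈ range n, α i :=
    isBoundedUnder_of ⟨A, fun n => (abs_le.1 (havg n)).2⟩
  have hbdd' : IsBoundedUnder (· ≥ ·) atTop fun n : ℕ => 1 / (n : ℝ) * ∑ i ∈ range n, α i :=
    isBoundedUnder_of ⟨-A, fun n => (abs_le.1 (havg n)).1⟩
  filter_upwards [ae_tendsto_weighted_centered_bernoulli hp0 hp1 hXmeas hXindep hXbern hA]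
    with ω hω
  have hsplit : (fun n : ℕ => 1 / (n : ℝ) * ∑ i ∈ range n,
        α i * (if X i ω = true then (1 : ℝ) else 0)) = fun n : ℕ =>
      p * (1 / (n : ℝ) * ∑ i ∈ range n, α i) +
        (∑ i ∈ range n, α i * ((if X i ω = true then (1 : ℝ) else 0) - p)) / n := by
    funext n
    simp only [mul_sub, sum_sub_distrib, ← sum_mul]
    ring
  rw [hsplit]
  exact ⟨Real.limsup_const_mul_add_of_tendsto_zero hp0 hbdd hbdd' hω,
    Real.liminf_const_mul_add_of_tendsto_zero hp0 hbdd hbdd' hω⟩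
end

section
/- Let {α_i}_{i≥1} be a bounded sequence of nonnegative real numbers and let {X_i}_{i≥1} be a {0,1}-valued stochastic process such that for every i ≥ 1 and every x^{i−1} ∈ {0,1}^{i−1} with P(X^{i−1} = x^{i−1}) > 0 one has P(X_i = 1 | X^{i−1} = x^{i−1}) ≤ p. Set ᾱ = limsup_{n→∞} (1/n) Σ_{i=1}^n α_i and α̲ = liminf_{n→∞} (1/n) Σ_{i=1}^n α_i. Then with probability one, limsup_{n→∞} (1/n) Σ_{i=1}^n α_i X_i ≤ p·ᾱ and liminf_{n→∞} (1/n) Σ_{i=1}^n α_i X_i ≤ p·α̲. -/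
open MeasureTheory ProbabilityTheory Filter Finset Real Function
open scoped ENNReal Topology

/-!
For `t ≥ 0` the bound on `P(X_n = 1 | X^{n-1})` gives
`E[e^{t α_n X_n} | X^{n-1}] ≤ 1 + p (e^{t α_n} - 1) ≤ exp (p (e^{t α_n} - 1))`, hence
`E[exp (t ∑_{i<n} α_i X_i)] ≤ exp (p ∑_{i<n} (e^{t α_i} - 1))`. Since
`e^{tα} - 1 = tα + O(t²)`, for small `t` Markov's inequality bounds the probability that
`∑_{i<n} α_i X_i ≥ p ∑_{i<n} α_i + n ε` by `e^{-cn}` with `c > 0`. By Borel–Cantelli, almost surely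
`(1/n) ∑_{i<n} α_i X_i ≤ p (1/n) ∑_{i<n} α_i + ε` eventually, for every `ε > 0`, and this
inequality passes to the limsup and to the liminf.
-/

lemma limsup_le_mul_limsup_of_forall_eventually_le {ι : Type*} {l : Filter ι} [l.NeBot]
    {u a : ι → ℝ} {p : ℝ} (hp : 0 ≤ p) (hu : IsBoundedUnder (· ≥ ·) l u)
    (ha : IsBoundedUnder (· ≤ ·) l a) (h : ∀ ε > 0, ∀ᶠ i in l, u i ≤ p * a i + ε) :
    limsup u l ≤ p * limsup a l := by
  refine le_of_forall_pos_le_add fun δ hδ => limsup_le_of_le hu.isCoboundedUnder_le ?_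
  obtain ⟨η, hη, hpη⟩ := exists_pos_mul_lt (half_pos hδ) p
  filter_upwards [eventually_lt_of_limsup_lt (lt_add_of_pos_right _ hη) ha,
    h _ (half_pos hδ)] with i hai hui
  nlinarith [mul_le_mul_of_nonneg_left hai.le hp]

lemma liminf_le_mul_liminf_of_forall_eventually_le {ι : Type*} {l : Filter ι} [l.NeBot]
    {u a : ι → ℝ} {p : ℝ} (hp : 0 ≤ p) (hu : IsBoundedUnder (· ≥ ·) l u)
    (ha : IsBoundedUnder (· ≤ ·) l a) (h : ∀ ε > 0, ∀ᶠ i in l, u i ≤ p * a i + ε) :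
    liminf u l ≤ p * liminf a l := by
  refine le_of_forall_pos_le_add fun δ hδ => liminf_le_of_frequently_le ?_ hu
  obtain ⟨η, hη, hpη⟩ := exists_pos_mul_lt (half_pos hδ) p
  refine ((frequently_lt_of_liminf_lt ha.isCoboundedUnder_ge
    (lt_add_of_pos_right _ hη)).and_eventually (h _ (half_pos hδ))).mono ?_
  rintro i ⟨hai, hui⟩
  nlinarith [mul_le_mul_of_nonneg_left hai.le hp]

lemma one_div_mul_sum_range_le {f : ℕ → ℝ} {A : ℝ} (hA : 0 ≤ A) (hf : ∀ i, f i ≤ A) (n : ℕ) :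
    1 / (n : ℝ) * ∑ i ∈ range n, f i ≤ A := by
  rcases n.eq_zero_or_pos with rfl | hn
  · simpa using hA
  rw [one_div_mul_eq_div, div_le_iff₀ (by exact_mod_cast hn)]
  simpa [mul_comm] using sum_le_card_nsmul (range n) f A fun i _ => hf i

lemma eventually_one_div_mul_le {s σ : ℕ → ℝ} {p : ℝ}
    (h : ∀ ε > 0, ∀ᶠ n in atTop, s n < p * σ n + n * ε) :
    ∀ ε > 0, ∀ᶠ n : ℕ in atTop, 1 / (n : ℝ) * s n ≤ p * (1 / (n : ℝ) * σ n) + ε := by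
  intro ε hε
  filter_upwards [h ε hε, eventually_gt_atTop 0] with n hs hn
  have hn : (0 : ℝ) < n := by exact_mod_cast hn
  calc 1 / (n : ℝ) * s n ≤ 1 / (n : ℝ) * (p * σ n + n * ε) := by gcongr
    _ = p * (1 / (n : ℝ) * σ n) + ε := by field_simp

lemma one_add_ofReal_mul_exp_sub_one_le {p y : ℝ} (hp : 0 ≤ p) (hy : 0 ≤ y) :
    1 + ENNReal.ofReal p * (ENNReal.ofReal (exp y) - 1)
      ≤ ENNReal.ofReal (exp (p * (exp y - 1))) := by
  have hy1 : 0 ≤ exp y - 1 := sub_nonneg.2 (one_le_exp hy)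
  rw [← ENNReal.ofReal_one, ← ENNReal.ofReal_sub _ zero_le_one, ← ENNReal.ofReal_mul hp,
    ← ENNReal.ofReal_add zero_le_one (mul_nonneg hp hy1)]
  exact ENNReal.ofReal_le_ofReal (by linarith [add_one_le_exp (p * (exp y - 1))])

lemma exp_sub_one_sub_le_sq {y : ℝ} (hy0 : 0 ≤ y) (hy1 : y ≤ 1) : exp y - 1 - y ≤ y ^ 2 :=
  (le_abs_self _).trans (abs_exp_sub_one_sub_id_le (by rwa [abs_of_nonneg hy0]))

lemma exists_chernoff_exponent_le {α : ℕ → ℝ} {p A ε : ℝ} (hp : 0 ≤ p) (hα : ∀ i, 0 ≤ α i)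
    (hαA : ∀ i, α i ≤ A) (hε : 0 < ε) :
    ∃ t > 0, ∃ c > 0, ∀ n : ℕ,
      p * ∑ i ∈ range n, (exp (t * α i) - 1) - t * (p * ∑ i ∈ range n, α i + n * ε)
        ≤ -(c * n) := by
  have hsmall : ∀ᶠ t in 𝓝 (0 : ℝ), t * A < 1 ∧ p * t * A ^ 2 < ε / 2 :=
    ((continuous_mul_const A).continuousAt.eventually_lt continuousAt_const (by simp)).and
      ((by fun_prop : Continuous fun t => p * t * A ^ 2).continuousAt.eventually_lt
        continuousAt_const (by simpa using half_pos hε))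
  obtain ⟨t, ⟨htA, htε⟩, ht : 0 < t⟩ :=
    ((hsmall.filter_mono nhdsWithin_le_nhds).and (self_mem_nhdsWithin (s := Set.Ioi 0))).exists
  refine ⟨t, ht, t * ε / 2, by positivity, fun n => ?_⟩
  have hterm : ∀ i, p * (exp (t * α i) - 1) - p * (t * α i) ≤ t * ε / 2 := fun i => by
    have htα : t * α i ≤ 1 := by nlinarith [hα i, hαA i]
    have hsq := exp_sub_one_sub_le_sq (mul_nonneg ht.le (hα i)) htα
    have hαsq : (t * α i) ^ 2 ≤ t * (t * A ^ 2) := by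
      rw [mul_pow, ← mul_assoc, ← sq]
      gcongr
      exacts [hα i, hαA i]
    nlinarith [mul_le_mul_of_nonneg_left hsq hp, mul_le_mul_of_nonneg_left hαsq hp]
  have hsum := sum_le_card_nsmul (range n) _ _ fun i _ => hterm i
  rw [sum_sub_distrib, ← mul_sum, ← mul_sum, ← mul_sum, card_range, nsmul_eq_mul] at hsum
  nlinarith

lemma ae_eventually_notMem_of_measure_le_exp {Ω : Type*} [MeasurableSpace Ω] {μ : Measure Ω}
    {s : ℕ → Set Ω} {c : ℝ} (hc : 0 < c) (hs : ∀ n, μ (s n) ≤ ENNReal.ofReal (exp (-(c * n)))) :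
    ∀ᵐ ω ∂μ, ∀ᶠ n in atTop, ω ∉ s n := by
  refine ae_eventually_notMem (ne_top_of_le_ne_top ?_ (ENNReal.tsum_le_tsum hs))
  have hsum : Summable fun n : ℕ => exp (-(c * n)) := by
    simpa [mul_comm] using summable_exp_nat_mul_iff.2 (neg_lt_zero.2 hc)
  rw [← ENNReal.ofReal_tsum_of_nonneg (fun _ => (exp_pos _).le) hsum]
  exact ENNReal.ofReal_ne_top

namespace BinaryProcess

variable {Ω : Type*} [MeasurableSpace Ω] {μ : Measure Ω} {X : ℕ → Ω → Bool}

def cylinder (X : ℕ → Ω → Bool) {n : ℕ} (x : Fin n → Bool) : Set Ω :=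
  {ω | ∀ j : Fin n, X j ω = x j}

/-- `P(X_n = 1 | X^{n-1} = x) ≤ q` for every past `x`, multiplied out so that pasts of
probability zero impose nothing. -/
def ProbTrueGivenPastLE (μ : Measure Ω) (X : ℕ → Ω → Bool) (q : ℝ≥0∞) : Prop :=
  ∀ n (x : Fin n → Bool), μ ({ω | X n ω = true} ∩ cylinder X x) ≤ q * μ (cylinder X x)

lemma measurableSet_cylinder (hX : ∀ i, Measurable (X i)) {n : ℕ} (x : Fin n → Bool) :
    MeasurableSet (cylinder X x) := by
  simp only [cylinder, Set.ofPred_forall]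
  exact .iInter fun j => hX j (measurableSet_singleton _)

lemma lintegral_eq_sum_setLIntegral_cylinder (hX : ∀ i, Measurable (X i)) (n : ℕ)
    (f : Ω → ℝ≥0∞) : ∫⁻ ω, f ω ∂μ = ∑ x : Fin n → Bool, ∫⁻ ω in cylinder X x, f ω ∂μ := by
  have hcover : ⋃ x : Fin n → Bool, cylinder X x = Set.univ :=
    Set.eq_univ_of_forall fun ω => Set.mem_iUnion.2 ⟨fun j => X j ω, fun _ => rfl⟩
  have hdisj : Pairwise (Disjoint on fun x : Fin n → Bool => cylinder X x) :=
    fun x y hxy => Set.disjoint_left.2 fun ω hx hy =>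
      hxy (funext fun j => (hx j).symm.trans (hy j))
  rw [← setLIntegral_univ, ← hcover, lintegral_iUnion (measurableSet_cylinder hX) hdisj,
    tsum_fintype]

lemma setLIntegral_ite_le {b : Ω → Bool} (hb : Measurable b) {C : Set Ω} {q : ℝ≥0∞}
    (hC : μ ({ω | b ω = true} ∩ C) ≤ q * μ C) (r : ℝ≥0∞) :
    ∫⁻ ω in C, (if b ω = true then r else 1) ∂μ ≤ (1 + q * (r - 1)) * μ C := by
  have hE : MeasurableSet {ω | b ω = true} := hb (measurableSet_singleton true)
  calc ∫⁻ ω in C, (if b ω = true then r else 1) ∂μ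
      ≤ ∫⁻ ω in C, (1 + {ω | b ω = true}.indicator (fun _ => r - 1) ω) ∂μ := by
        refine lintegral_mono fun ω => ?_
        by_cases h : b ω = true <;> simp [h, le_add_tsub]
    _ = μ C + (r - 1) * μ ({ω | b ω = true} ∩ C) := by
        rw [lintegral_add_left measurable_const, setLIntegral_one, lintegral_indicator_const hE,
          Measure.restrict_apply hE]
    _ ≤ μ C + (r - 1) * (q * μ C) := by gcongr
    _ = (1 + q * (r - 1)) * μ C := by ring

lemma lintegral_comp_past_mul_ite_le (hX : ∀ i, Measurable (X i)) {n : ℕ} {q : ℝ≥0∞}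
    (hq : ∀ x : Fin n → Bool, μ ({ω | X n ω = true} ∩ cylinder X x) ≤ q * μ (cylinder X x))
    (F : (Fin n → Bool) → ℝ≥0∞) (r : ℝ≥0∞) :
    ∫⁻ ω, F (fun j => X j ω) * (if X n ω = true then r else 1) ∂μ
      ≤ (1 + q * (r - 1)) * ∫⁻ ω, F (fun j => X j ω) ∂μ := by
  have hpast : ∀ (x : Fin n → Bool) (H : (Fin n → Bool) → Ω → ℝ≥0∞),
      ∫⁻ ω in cylinder X x, H (fun j => X j ω) ω ∂μ = ∫⁻ ω in cylinder X x, H x ω ∂μ :=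
    fun x H => setLIntegral_congr_fun (measurableSet_cylinder hX x) fun ω hω => by
      rw [show (fun j : Fin n => X j ω) = x from funext hω]
  have hG : Measurable fun ω => if X n ω = true then r else 1 :=
    Measurable.ite (hX n (measurableSet_singleton true)) measurable_const measurable_const
  rw [lintegral_eq_sum_setLIntegral_cylinder hX n, lintegral_eq_sum_setLIntegral_cylinder hX n,
    mul_sum]
  refine sum_le_sum fun x _ => ?_
  calc ∫⁻ ω in cylinder X x, F (fun j => X j ω) * (if X n ω = true then r else 1) ∂μ
      = F x * ∫⁻ ω in cylinder X x, (if X n ω = true then r else 1) ∂μ := by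
        rw [hpast x fun y ω => F y * (if X n ω = true then r else 1), lintegral_const_mul _ hG]
    _ ≤ F x * ((1 + q * (r - 1)) * μ (cylinder X x)) := by
        gcongr
        exact setLIntegral_ite_le (hX n) (hq x) r
    _ = (1 + q * (r - 1)) * ∫⁻ ω in cylinder X x, F (fun j => X j ω) ∂μ := by
        rw [hpast x fun y _ => F y, setLIntegral_const]
        ring

lemma lintegral_prod_ite_le [IsProbabilityMeasure μ] (hX : ∀ i, Measurable (X i)) {q : ℝ≥0∞}
    (hq : ProbTrueGivenPastLE μ X q)
    (r : ℕ → ℝ≥0∞) (n : ℕ) :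
    ∫⁻ ω, ∏ i ∈ range n, (if X i ω = true then r i else 1) ∂μ
      ≤ ∏ i ∈ range n, (1 + q * (r i - 1)) := by
  induction n with
  | zero => simp
  | succ n ih =>
    have hpast : ∀ ω, ∏ i ∈ range n, (if X i ω = true then r i else 1)
        = ∏ j : Fin n, (if X j ω = true then r j else 1) := fun ω =>
      (Fin.prod_univ_eq_prod_range (fun i => if X i ω = true then r i else 1) n).symm
    simp_rw [prod_range_succ, hpast]
    calc _ ≤ (1 + q * (r n - 1)) * ∫⁻ ω, ∏ j : Fin n, (if X j ω = true then r j else 1) ∂μ :=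
          lintegral_comp_past_mul_ite_le hX (hq n)
            (fun x => ∏ j : Fin n, (if x j = true then r j else 1)) (r n)
      _ ≤ _ := by
          rw [mul_comm]
          gcongr
          simpa only [hpast] using ih

lemma lintegral_exp_mul_sum_le [IsProbabilityMeasure μ] (hX : ∀ i, Measurable (X i)) {p : ℝ}
    (hp : 0 ≤ p) (hq : ProbTrueGivenPastLE μ X (ENNReal.ofReal p))
    {α : ℕ → ℝ} (hα : ∀ i, 0 ≤ α i) {t : ℝ} (ht : 0 ≤ t) (n : ℕ) :
    ∫⁻ ω, ENNReal.ofReal (exp (t * ∑ i ∈ range n, α i * (if X i ω = true then 1 else 0))) ∂μ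
      ≤ ENNReal.ofReal (exp (p * ∑ i ∈ range n, (exp (t * α i) - 1))) := by
  have hfactor : ∀ ω,
      ENNReal.ofReal (exp (t * ∑ i ∈ range n, α i * (if X i ω = true then 1 else 0)))
        = ∏ i ∈ range n, (if X i ω = true then ENNReal.ofReal (exp (t * α i)) else 1) := by
    intro ω
    rw [mul_sum, exp_sum, ENNReal.ofReal_prod_of_nonneg fun i _ => (exp_pos _).le]
    refine prod_congr rfl fun i _ => ?_
    split_ifs <;> simp
  simp_rw [hfactor]
  calc _ ≤ ∏ i ∈ range n, (1 + ENNReal.ofReal p * (ENNReal.ofReal (exp (t * α i)) - 1)) :=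
        lintegral_prod_ite_le hX hq _ n
    _ ≤ ∏ i ∈ range n, ENNReal.ofReal (exp (p * (exp (t * α i) - 1))) :=
        prod_le_prod' fun i _ => one_add_ofReal_mul_exp_sub_one_le hp (mul_nonneg ht (hα i))
    _ = _ := by
        rw [← ENNReal.ofReal_prod_of_nonneg fun _ _ => (exp_pos _).le, ← exp_sum, mul_sum]

lemma measure_sum_ge_le_exp [IsProbabilityMeasure μ] (hX : ∀ i, Measurable (X i)) {p : ℝ}
    (hp : 0 ≤ p) (hq : ProbTrueGivenPastLE μ X (ENNReal.ofReal p))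
    {α : ℕ → ℝ} (hα : ∀ i, 0 ≤ α i) {t : ℝ} (ht : 0 ≤ t) (a : ℝ) (n : ℕ) :
    μ {ω | a ≤ ∑ i ∈ range n, α i * (if X i ω = true then 1 else 0)}
      ≤ ENNReal.ofReal (exp (p * ∑ i ∈ range n, (exp (t * α i) - 1) - t * a)) := by
  set S : Ω → ℝ := fun ω => ∑ i ∈ range n, α i * (if X i ω = true then 1 else 0)
  have hS : Measurable S := Finset.measurable_sum _ fun i _ =>
    (Measurable.ite (hX i (measurableSet_singleton true)) measurable_const
      measurable_const).const_mul (α i)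
  have hsub :
      {ω | a ≤ S ω} ⊆ {ω | ENNReal.ofReal (exp (t * a)) ≤ ENNReal.ofReal (exp (t * S ω))} :=
    fun ω h => ENNReal.ofReal_le_ofReal (exp_le_exp.2 (mul_le_mul_of_nonneg_left h ht))
  have hmarkov : ENNReal.ofReal (exp (t * a)) * μ {ω | a ≤ S ω}
      ≤ ENNReal.ofReal (exp (p * ∑ i ∈ range n, (exp (t * α i) - 1))) :=
    calc _ ≤ ENNReal.ofReal (exp (t * a)) *
          μ {ω | ENNReal.ofReal (exp (t * a)) ≤ ENNReal.ofReal (exp (t * S ω))} := by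
          gcongr
      _ ≤ ∫⁻ ω, ENNReal.ofReal (exp (t * S ω)) ∂μ :=
          mul_meas_ge_le_lintegral₀ (by fun_prop) _
      _ ≤ _ := lintegral_exp_mul_sum_le hX hp hq hα ht n
  calc μ {ω | a ≤ S ω}
      = ENNReal.ofReal (exp (-(t * a))) * (ENNReal.ofReal (exp (t * a)) * μ {ω | a ≤ S ω}) := by
        rw [← mul_assoc, ← ENNReal.ofReal_mul (exp_pos _).le, ← exp_add, neg_add_cancel, exp_zero,
          ENNReal.ofReal_one, one_mul]
    _ ≤ ENNReal.ofReal (exp (-(t * a))) *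
          ENNReal.ofReal (exp (p * ∑ i ∈ range n, (exp (t * α i) - 1))) := by gcongr
    _ = _ := by
        rw [← ENNReal.ofReal_mul (exp_pos _).le, ← exp_add, neg_add_eq_sub]

lemma ae_forall_eventually_sum_lt [IsProbabilityMeasure μ] (hX : ∀ i, Measurable (X i))
    {p : ℝ} (hp : 0 ≤ p) (hq : ProbTrueGivenPastLE μ X (ENNReal.ofReal p))
    {α : ℕ → ℝ} {A : ℝ} (hα : ∀ i, 0 ≤ α i) (hαA : ∀ i, α i ≤ A) :
    ∀ᵐ ω ∂μ, ∀ ε > 0, ∀ᶠ n : ℕ in atTop,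
      ∑ i ∈ range n, α i * (if X i ω = true then 1 else 0) < p * ∑ i ∈ range n, α i + n * ε := by
  have hrate : ∀ ε > 0, ∀ᵐ ω ∂μ, ∀ᶠ n : ℕ in atTop,
      ∑ i ∈ range n, α i * (if X i ω = true then 1 else 0) < p * ∑ i ∈ range n, α i + n * ε := by
    intro ε hε
    obtain ⟨t, ht, c, hc, hexp⟩ := exists_chernoff_exponent_le hp hα hαA hε
    filter_upwards [ae_eventually_notMem_of_measure_le_exp hc fun n =>
      (measure_sum_ge_le_exp hX hp hq hα ht.le _ n).trans
        (ENNReal.ofReal_le_ofReal (exp_le_exp.2 (hexp n)))] with ω hω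
    exact hω.mono fun n hn => not_le.1 hn
  filter_upwards [ae_all_iff.2 fun k : ℕ => hrate (1 / (k + 1)) Nat.one_div_pos_of_nat]
    with ω hω ε hε
  obtain ⟨k, hk⟩ := exists_nat_one_div_lt hε
  filter_upwards [hω k] with n hn
  exact hn.trans_le (by gcongr)

end BinaryProcess

theorem limit_bounds_upper_general
    {Ω : Type*} [MeasurableSpace Ω] (μ : Measure Ω) [IsProbabilityMeasure μ]
    (p : ℝ) (hp0 : 0 ≤ p)
    (X : ℕ → Ω → Bool) (hXmeas : ∀ i, Measurable (X i))
    (hcond : ∀ i : ℕ, ∀ x : Fin i → Bool,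
      μ {ω | ∀ j : Fin i, X (j : ℕ) ω = x j} ≠ 0 →
      μ ({ω | X i ω = true} ∩ {ω | ∀ j : Fin i, X (j : ℕ) ω = x j})
        ≤ ENNReal.ofReal p * μ {ω | ∀ j : Fin i, X (j : ℕ) ω = x j})
    (α : ℕ → ℝ) (hαnn : ∀ i, 0 ≤ α i) (hαbd : ∃ A, ∀ i, α i ≤ A) :
    ∀ᵐ ω ∂μ,
      (Filter.limsup
          (fun n : ℕ => (1 / (n : ℝ)) * ∑ i ∈ Finset.range n,
            α i * (if X i ω = true then (1 : ℝ) else 0)) atTop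
        ≤ p * Filter.limsup
            (fun n : ℕ => (1 / (n : ℝ)) * ∑ i ∈ Finset.range n, α i) atTop)
      ∧ (Filter.liminf
          (fun n : ℕ => (1 / (n : ℝ)) * ∑ i ∈ Finset.range n,
            α i * (if X i ω = true then (1 : ℝ) else 0)) atTop
        ≤ p * Filter.liminf
            (fun n : ℕ => (1 / (n : ℝ)) * ∑ i ∈ Finset.range n, α i) atTop) := by
  obtain ⟨A, hαA⟩ := hαbd
  have hq : BinaryProcess.ProbTrueGivenPastLE μ X (ENNReal.ofReal p) := by
    intro n x
    by_cases h0 : μ (BinaryProcess.cylinder X x) = 0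
    · simp [measure_mono_null Set.inter_subset_right h0]
    · exact hcond n x h0
  have hmean : IsBoundedUnder (· ≤ ·) atTop fun n : ℕ => 1 / (n : ℝ) * ∑ i ∈ range n, α i :=
    isBoundedUnder_of ⟨A, one_div_mul_sum_range_le ((hαnn 0).trans (hαA 0)) hαA⟩
  filter_upwards [BinaryProcess.ae_forall_eventually_sum_lt hXmeas hp0 hq hαnn hαA] with ω hω
  have hnonneg : IsBoundedUnder (· ≥ ·) atTop fun n : ℕ =>
      1 / (n : ℝ) * ∑ i ∈ range n, α i * (if X i ω = true then (1 : ℝ) else 0) :=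
    isBoundedUnder_of ⟨0, fun n => mul_nonneg (by positivity)
      (sum_nonneg fun i _ => mul_nonneg (hαnn i) (by split_ifs <;> norm_num))⟩
  have hε := eventually_one_div_mul_le hω
  exact ⟨limsup_le_mul_limsup_of_forall_eventually_le hp0 hnonneg hmean hε,
    liminf_le_mul_liminf_of_forall_eventually_le hp0 hnonneg hmean hε⟩

/-- Upper-bound half of the paper's Lemma 9: if `X` is a binary process whose conditional
probability of a one given any past (of positive probability) is at most `p`, and `α` is a
bounded sequence of nonnegative reals, then almost surely
`limsup (1/n) ∑_{i<n} α i X i ≤ p * limsup (1/n) ∑_{i<n} α i` and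
`liminf (1/n) ∑_{i<n} α i X i ≤ p * liminf (1/n) ∑_{i<n} α i`. -/
theorem limit_bounds_upper
    {Ω : Type*} [MeasurableSpace Ω] (μ : Measure Ω) [IsProbabilityMeasure μ]
    (p : ℝ) (hp0 : 0 ≤ p) (hp1 : p ≤ 1)
    (X : ℕ → Ω → Bool) (hXmeas : ∀ i, Measurable (X i))
    (hcond : ∀ i : ℕ, ∀ x : Fin i → Bool,
      μ {ω | ∀ j : Fin i, X (j : ℕ) ω = x j} ≠ 0 →
      μ ({ω | X i ω = true} ∩ {ω | ∀ j : Fin i, X (j : ℕ) ω = x j})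
        ≤ ENNReal.ofReal p * μ {ω | ∀ j : Fin i, X (j : ℕ) ω = x j})
    (α : ℕ → ℝ) (hαnn : ∀ i, 0 ≤ α i) (hαbd : ∃ A, ∀ i, α i ≤ A) :
    ∀ᵐ ω ∂μ,
      (Filter.limsup
          (fun n : ℕ => (1 / (n : ℝ)) * ∑ i ∈ Finset.range n,
            α i * (if X i ω = true then (1 : ℝ) else 0)) atTop
        ≤ p * Filter.limsup
            (fun n : ℕ => (1 / (n : ℝ)) * ∑ i ∈ Finset.range n, α i) atTop)
      ∧ (Filter.liminf
          (fun n : ℕ => (1 / (n : ℝ)) * ∑ i ∈ Finset.range n,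
            α i * (if X i ω = true then (1 : ℝ) else 0)) atTop
        ≤ p * Filter.liminf
            (fun n : ℕ => (1 / (n : ℝ)) * ∑ i ∈ Finset.range n, α i) atTop) :=
  limit_bounds_upper_general μ p hp0 X hXmeas hcond α hαnn hαbd
end

section
/- Let {α_i}_{i≥1} be a bounded sequence of nonnegative real numbers and let {X_i}_{i≥1} be a {0,1}-valued stochastic process such that for every i ≥ 1 and every x^{i−1} ∈ {0,1}^{i−1} with P(X^{i−1} = x^{i−1}) > 0 one has P(X_i = 1 | X^{i−1} = x^{i−1}) ≥ p. Set ᾱ = limsup_{n→∞} (1/n) Σ_{i=1}^n α_i and α̲ = liminf_{n→∞} (1/n) Σ_{i=1}^n α_i. Then with probability one, limsup_{n→∞} (1/n) Σ_{i=1}^n α_i X_i ≥ p·ᾱ and liminf_{n→∞} (1/n) Σ_{i=1}^n α_i X_i ≥ p·α̲. -/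
/-!
Write `S n = ∑_{i<n} α i * (p - X i)`. Conditioning on the first `n` outcomes, the hypothesis
`P(X n = 1 | past) ≥ p` and an elementary Hoeffding-type bound for a centred Bernoulli variable
give `E[exp (t * S (n+1))] ≤ exp ((t * α n)^2) * E[exp (t * S n)]`, hence
`E[exp (t * S n)] ≤ exp (n * t^2 * A^2)` when `α ≤ A`. Chernoff's bound with `t = ε / (2 A^2)`
makes `P(S n ≥ n ε) ≤ exp (-ε^2 / (4 A^2))^n` summable, so by Borel–Cantelli `S n < n ε`
eventually, almost surely and simultaneously for all `ε > 0`. Dividing by `n`, the running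
average of `α i * X i` eventually exceeds `p` times that of `α` minus `ε`, which yields both
the `limsup` and the `liminf` inequality.
-/

open MeasureTheory ProbabilityTheory Filter Real
open scoped ENNReal

lemma Real.exp_neg_le_one_sub_add_sq {x : ℝ} (hx : 0 ≤ x) : exp (-x) ≤ 1 - x + x ^ 2 := by
  have hx1 : 0 < 1 + x := by linarith
  calc exp (-x) = (exp x)⁻¹ := exp_neg x
    _ ≤ (1 + x)⁻¹ := inv_anti₀ hx1 (by linarith [add_one_le_exp x])
    _ ≤ 1 - x + x ^ 2 := by
      rw [inv_le_iff_one_le_mul₀ hx1]; nlinarith [pow_nonneg hx 3]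

lemma centered_bernoulli_mgf_le {p s : ℝ} (hp0 : 0 ≤ p) (hp1 : p ≤ 1) (hs : 0 ≤ s) :
    p * exp (s * (p - 1)) + (1 - p) * exp (s * p) ≤ exp (s ^ 2) := by
  have hsplit : exp (s * (p - 1)) = exp (s * p) * exp (-s) := by rw [← exp_add]; ring_nf
  calc p * exp (s * (p - 1)) + (1 - p) * exp (s * p)
      = exp (s * p) * (1 + p * (exp (-s) - 1)) := by rw [hsplit]; ring
    _ ≤ exp (s * p) * (1 + (-(p * s) + p * s ^ 2)) := by
      gcongr; nlinarith [exp_neg_le_one_sub_add_sq hs]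
    _ ≤ exp (s * p) * exp (-(p * s) + p * s ^ 2) := by
      gcongr; linarith [add_one_le_exp (-(p * s) + p * s ^ 2)]
    _ = exp (p * s ^ 2) := by rw [← exp_add]; ring_nf
    _ ≤ exp (s ^ 2) := by gcongr; nlinarith [sq_nonneg s]

lemma centered_bernoulli_mgf_le_of_mul_le {p s m₁ m₀ : ℝ} (hp0 : 0 ≤ p) (hp1 : p ≤ 1)
    (hs : 0 ≤ s) (hm₁0 : 0 ≤ m₁) (hm₀ : 0 ≤ m₀) (hm₁ : p * (m₁ + m₀) ≤ m₁) :
    m₁ * exp (s * (p - 1)) + m₀ * exp (s * p) ≤ (m₁ + m₀) * exp (s ^ 2) := by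
  have hexp : exp (s * (p - 1)) ≤ exp (s * p) := by gcongr; linarith
  calc m₁ * exp (s * (p - 1)) + m₀ * exp (s * p)
      = (m₁ + m₀) * (p * exp (s * (p - 1)) + (1 - p) * exp (s * p))
        + (m₁ - p * (m₁ + m₀)) * (exp (s * (p - 1)) - exp (s * p)) := by ring
    _ ≤ (m₁ + m₀) * (p * exp (s * (p - 1)) + (1 - p) * exp (s * p)) := by
      nlinarith [mul_nonneg (sub_nonneg.2 hm₁) (sub_nonneg.2 hexp)]
    _ ≤ (m₁ + m₀) * exp (s ^ 2) := by gcongr; exact centered_bernoulli_mgf_le hp0 hp1 hs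

lemma Fin.sum_univ_fun_snoc {β M : Type*} [Fintype β] [AddCommMonoid M] {n : ℕ}
    (f : (Fin (n + 1) → β) → M) : ∑ y, f y = ∑ x, ∑ c, f (Fin.snoc x c) := by
  rw [← (Fin.snocEquiv fun _ => β).sum_comp, Fintype.sum_prod_type, Finset.sum_comm]
  rfl

section Measure

variable {Ω : Type*} [MeasurableSpace Ω] {μ : Measure Ω}

lemma integral_comp_eq_sum_measureReal_preimage {β : Type*} [MeasurableSpace β] [Fintype β]
    [MeasurableSingletonClass β] [IsFiniteMeasure μ] {Y : Ω → β} (hY : Measurable Y)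
    (f : β → ℝ) : ∫ ω, f (Y ω) ∂μ = ∑ x, μ.real (Y ⁻¹' {x}) * f x := by
  rw [← integral_map hY.aemeasurable (measurable_of_finite f).aestronglyMeasurable,
    integral_fintype (hf := .of_finite)]
  simp [map_measureReal_apply hY (measurableSet_singleton _)]

lemma mul_measureReal_le_measureReal_inter {B C : Set Ω} {p : ℝ} (hp : 0 ≤ p) (hμ : μ C ≠ ∞)
    (h : μ C ≠ 0 → ENNReal.ofReal p * μ C ≤ μ (B ∩ C)) :
    p * μ.real C ≤ μ.real (C ∩ B) := by
  by_cases hC : μ C = 0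
  · simp [measureReal_def, hC]
  · have := ENNReal.toReal_mono (measure_ne_top_of_subset Set.inter_subset_right hμ) (h hC)
    rwa [ENNReal.toReal_mul, ENNReal.toReal_ofReal hp, Set.inter_comm] at this

lemma sum_measureReal_inter_mul_exp_le [IsFiniteMeasure μ] {Y : Ω → Bool} (hY : Measurable Y)
    {C : Set Ω} {p s : ℝ} (hp0 : 0 ≤ p) (hp1 : p ≤ 1) (hs : 0 ≤ s)
    (hC : p * μ.real C ≤ μ.real (C ∩ {ω | Y ω = true})) :
    ∑ c, μ.real (C ∩ {ω | Y ω = c}) * exp (s * (p - if c then 1 else 0))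
      ≤ μ.real C * exp (s ^ 2) := by
  have hsplit : μ.real (C ∩ {ω | Y ω = true}) + μ.real (C ∩ {ω | Y ω = false}) = μ.real C := by
    have hfalse : C ∩ {ω | Y ω = false} = C \ {ω | Y ω = true} := by ext; simp
    rw [hfalse]
    exact measureReal_inter_add_sdiff (hY (measurableSet_singleton true))
  rw [← hsplit] at hC ⊢
  simpa using
    centered_bernoulli_mgf_le_of_mul_le hp0 hp1 hs measureReal_nonneg measureReal_nonneg hC

end Measure

namespace BinaryProcess

variable {Ω : Type*}

def history (X : ℕ → Ω → Bool) (n : ℕ) (ω : Ω) : Fin n → Bool := fun j => X j ω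

def shortfall (α : ℕ → ℝ) (p : ℝ) {n : ℕ} (x : Fin n → Bool) : ℝ :=
  ∑ j : Fin n, α j * (p - if x j then 1 else 0)

/-- `P(X n = true | history X n = x) ≥ p`, multiplied out so that null pasts impose nothing. -/
def CondProbTrueGE [MeasurableSpace Ω] (μ : Measure Ω) (X : ℕ → Ω → Bool) (p : ℝ) : Prop :=
  ∀ n (x : Fin n → Bool),
    p * μ.real (history X n ⁻¹' {x}) ≤ μ.real (history X n ⁻¹' {x} ∩ {ω | X n ω = true})

variable {X : ℕ → Ω → Bool} {n : ℕ} {α : ℕ → ℝ} {p : ℝ}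

lemma preimage_history_singleton (x : Fin n → Bool) :
    history X n ⁻¹' {x} = {ω | ∀ j : Fin n, X j ω = x j} := by
  ext ω; simp [history, funext_iff]

lemma history_succ (ω : Ω) : history X (n + 1) ω = Fin.snoc (history X n ω) (X n ω) := by
  ext j; refine Fin.lastCases ?_ (fun i => ?_) j <;> simp [history]

lemma preimage_history_snoc (x : Fin n → Bool) (c : Bool) :
    history X (n + 1) ⁻¹' {Fin.snoc x c} = history X n ⁻¹' {x} ∩ {ω | X n ω = c} := by
  ext ω; simp [history_succ, Fin.snoc_inj]

lemma measurable_history [MeasurableSpace Ω] (hX : ∀ i, Measurable (X i)) :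
    Measurable (history X n) :=
  measurable_pi_lambda _ fun j => hX j

lemma shortfall_snoc (x : Fin n → Bool) (c : Bool) :
    shortfall α p (Fin.snoc x c) = shortfall α p x + α n * (p - if c then 1 else 0) := by
  simp [shortfall, Fin.sum_univ_castSucc]

lemma shortfall_history (α : ℕ → ℝ) (p : ℝ) (ω : Ω) :
    shortfall α p (history X n ω) =
      p * ∑ i ∈ Finset.range n, α i - ∑ i ∈ Finset.range n, α i * (if X i ω then 1 else 0) := by
  rw [Finset.mul_sum, ← Finset.sum_sub_distrib, shortfall]
  exact (Fin.sum_univ_eq_sum_range (fun i => α i * (p - if X i ω then 1 else 0)) n).trans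
    (Finset.sum_congr rfl fun i _ => by ring)

variable [MeasurableSpace Ω] {μ : Measure Ω}

lemma mgf_shortfall_eq_sum [IsFiniteMeasure μ] (hX : ∀ i, Measurable (X i)) (t : ℝ) :
    mgf (fun ω => shortfall α p (history X n ω)) μ t
      = ∑ x, μ.real (history X n ⁻¹' {x}) * exp (t * shortfall α p x) :=
  integral_comp_eq_sum_measureReal_preimage (measurable_history hX)
    fun x => exp (t * shortfall α p x)

lemma mgf_shortfall_succ_le [IsFiniteMeasure μ] (hX : ∀ i, Measurable (X i))
    (hp0 : 0 ≤ p) (hp1 : p ≤ 1) (hcond : CondProbTrueGE μ X p) (hα : 0 ≤ α n)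
    {t : ℝ} (ht : 0 ≤ t) :
    mgf (fun ω => shortfall α p (history X (n + 1) ω)) μ t
      ≤ exp ((t * α n) ^ 2) * mgf (fun ω => shortfall α p (history X n ω)) μ t := by
  rw [mgf_shortfall_eq_sum hX, mgf_shortfall_eq_sum hX, Fin.sum_univ_fun_snoc, Finset.mul_sum]
  refine Finset.sum_le_sum fun x _ => ?_
  simp only [preimage_history_snoc, shortfall_snoc, mul_add, exp_add]
  calc ∑ c, μ.real (history X n ⁻¹' {x} ∩ {ω | X n ω = c}) *
        (exp (t * shortfall α p x) * exp (t * (α n * (p - if c then 1 else 0))))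
      = exp (t * shortfall α p x) * ∑ c, μ.real (history X n ⁻¹' {x} ∩ {ω | X n ω = c}) *
          exp (t * α n * (p - if c then 1 else 0)) := by
        rw [Finset.mul_sum]; exact Finset.sum_congr rfl fun c _ => by ring_nf
    _ ≤ exp (t * shortfall α p x) * (μ.real (history X n ⁻¹' {x}) * exp ((t * α n) ^ 2)) := by
        gcongr
        exact sum_measureReal_inter_mul_exp_le (hX n) hp0 hp1 (mul_nonneg ht hα) (hcond n x)
    _ = _ := by ring

variable [IsProbabilityMeasure μ]

lemma mgf_shortfall_le (hX : ∀ i, Measurable (X i)) (hp0 : 0 ≤ p) (hp1 : p ≤ 1)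
    (hcond : CondProbTrueGE μ X p) (hα : ∀ i, 0 ≤ α i) {t : ℝ} (ht : 0 ≤ t) (n : ℕ) :
    mgf (fun ω => shortfall α p (history X n ω)) μ t
      ≤ exp (t ^ 2 * ∑ i ∈ Finset.range n, α i ^ 2) := by
  induction n with
  | zero => simp [shortfall]
  | succ n ih =>
    calc _ ≤ exp ((t * α n) ^ 2) * mgf (fun ω => shortfall α p (history X n ω)) μ t :=
          mgf_shortfall_succ_le hX hp0 hp1 hcond (hα n) ht
      _ ≤ exp ((t * α n) ^ 2) * exp (t ^ 2 * ∑ i ∈ Finset.range n, α i ^ 2) := by gcongr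
      _ = exp (t ^ 2 * ∑ i ∈ Finset.range (n + 1), α i ^ 2) := by
          rw [← exp_add, Finset.sum_range_succ]; ring_nf

lemma measureReal_shortfall_ge_le (hX : ∀ i, Measurable (X i)) (hp0 : 0 ≤ p) (hp1 : p ≤ 1)
    (hcond : CondProbTrueGE μ X p) (hα : ∀ i, 0 ≤ α i) {A : ℝ} (hA : 0 < A)
    (hαA : ∀ i, α i ≤ A) {ε : ℝ} (hε : 0 ≤ ε) (n : ℕ) :
    μ.real {ω | n * ε ≤ shortfall α p (history X n ω)} ≤ exp (-(ε ^ 2 / (4 * A ^ 2))) ^ n := by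
  set t := ε / (2 * A ^ 2)
  have ht : 0 ≤ t := by positivity
  have hint : Integrable (fun ω => exp (t * shortfall α p (history X n ω))) μ :=
    (Integrable.of_finite (f := fun x => exp (t * shortfall α p x))).comp_measurable
      (measurable_history hX)
  have hsq : ∑ i ∈ Finset.range n, α i ^ 2 ≤ n * A ^ 2 :=
    (Finset.sum_le_sum fun i _ => pow_le_pow_left₀ (hα i) (hαA i) 2).trans_eq (by simp)
  calc _ ≤ exp (-t * (n * ε)) * mgf (fun ω => shortfall α p (history X n ω)) μ t :=
        measure_ge_le_exp_mul_mgf _ ht hint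
    _ ≤ exp (-t * (n * ε)) * exp (t ^ 2 * (n * A ^ 2)) := by
        gcongr
        exact (mgf_shortfall_le hX hp0 hp1 hcond hα ht n).trans (by gcongr)
    _ = exp (-(ε ^ 2 / (4 * A ^ 2))) ^ n := by
        rw [← exp_add, ← exp_nat_mul]; congr 1; simp only [t]; field_simp; ring

lemma ae_eventually_shortfall_lt (hX : ∀ i, Measurable (X i)) (hp0 : 0 ≤ p) (hp1 : p ≤ 1)
    (hcond : CondProbTrueGE μ X p) (hα : ∀ i, 0 ≤ α i) {A : ℝ} (hA : 0 < A)
    (hαA : ∀ i, α i ≤ A) {ε : ℝ} (hε : 0 < ε) :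
    ∀ᵐ ω ∂μ, ∀ᶠ n in atTop, shortfall α p (history X n ω) < n * ε := by
  set r := exp (-(ε ^ 2 / (4 * A ^ 2)))
  have hr : ENNReal.ofReal r < 1 := by
    refine ENNReal.ofReal_lt_one.2 (exp_lt_one_iff.2 ?_)
    have : 0 < ε ^ 2 / (4 * A ^ 2) := by positivity
    linarith
  have hμ (n : ℕ) : μ {ω | n * ε ≤ shortfall α p (history X n ω)} ≤ ENNReal.ofReal r ^ n := by
    rw [← ofReal_measureReal, ← ENNReal.ofReal_pow (exp_pos _).le]
    exact ENNReal.ofReal_le_ofReal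
      (measureReal_shortfall_ge_le hX hp0 hp1 hcond hα hA hαA hε.le n)
  have hsum := ((ENNReal.tsum_le_tsum hμ).trans_lt (tsum_geometric_lt_top.2 hr)).ne
  filter_upwards [ae_eventually_notMem hsum] with ω hω
  simpa using hω

lemma ae_forall_eventually_shortfall_lt (hX : ∀ i, Measurable (X i)) (hp0 : 0 ≤ p)
    (hp1 : p ≤ 1) (hcond : CondProbTrueGE μ X p) (hα : ∀ i, 0 ≤ α i) {A : ℝ} (hA : 0 < A)
    (hαA : ∀ i, α i ≤ A) :
    ∀ᵐ ω ∂μ, ∀ ε > 0, ∀ᶠ n in atTop, shortfall α p (history X n ω) < n * ε := by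
  have := ae_all_iff.2 fun k : ℕ =>
    ae_eventually_shortfall_lt hX hp0 hp1 hcond hα hA hαA (Nat.one_div_pos_of_nat (n := k))
  filter_upwards [this] with ω hω ε hε
  obtain ⟨k, hk⟩ := exists_nat_one_div_lt hε
  filter_upwards [hω k] with n hn
  exact hn.trans_le (by gcongr)

end BinaryProcess

section RunningAverage

lemma mul_limsup_le_limsup {ι : Type*} {l : Filter ι} [l.NeBot] {f g : ι → ℝ} {p : ℝ}
    (hp : 0 ≤ p) (hf_le : IsBoundedUnder (· ≤ ·) l f) (hf_ge : IsBoundedUnder (· ≥ ·) l f)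
    (hg : IsBoundedUnder (· ≤ ·) l g) (h : ∀ ε > 0, ∀ᶠ i in l, p * f i - ε ≤ g i) :
    p * limsup f l ≤ limsup g l := by
  refine le_of_forall_sub_le fun ε hε => ?_
  have hmono : Monotone fun x => p * x - ε :=
    fun _ _ hab => sub_le_sub_right (mul_le_mul_of_nonneg_left hab hp) ε
  rw [hmono.map_limsup_of_continuousAt f (by fun_prop) hf_le hf_ge.isCoboundedUnder_le]
  exact limsup_le_limsup (h ε hε) (hmono.isBoundedUnder_ge_comp hf_ge).isCoboundedUnder_le hg

lemma mul_liminf_le_liminf {ι : Type*} {l : Filter ι} [l.NeBot] {f g : ι → ℝ} {p : ℝ}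
    (hp : 0 ≤ p) (hf_le : IsBoundedUnder (· ≤ ·) l f) (hf_ge : IsBoundedUnder (· ≥ ·) l f)
    (hg : IsBoundedUnder (· ≤ ·) l g) (h : ∀ ε > 0, ∀ᶠ i in l, p * f i - ε ≤ g i) :
    p * liminf f l ≤ liminf g l := by
  refine le_of_forall_sub_le fun ε hε => ?_
  have hmono : Monotone fun x => p * x - ε :=
    fun _ _ hab => sub_le_sub_right (mul_le_mul_of_nonneg_left hab hp) ε
  rw [hmono.map_liminf_of_continuousAt f (by fun_prop) hf_le.isCoboundedUnder_ge hf_ge]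
  exact liminf_le_liminf (h ε hε) (hmono.isBoundedUnder_ge_comp hf_ge) hg.isCoboundedUnder_ge

noncomputable def runningAverage (u : ℕ → ℝ) (n : ℕ) : ℝ :=
  1 / (n : ℝ) * ∑ i ∈ Finset.range n, u i

lemma runningAverage_nonneg {u : ℕ → ℝ} (hu : ∀ i, 0 ≤ u i) (n : ℕ) :
    0 ≤ runningAverage u n :=
  mul_nonneg (by positivity) (Finset.sum_nonneg fun i _ => hu i)

lemma runningAverage_mono {u v : ℕ → ℝ} (h : ∀ i, u i ≤ v i) (n : ℕ) :
    runningAverage u n ≤ runningAverage v n :=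
  mul_le_mul_of_nonneg_left (Finset.sum_le_sum fun i _ => h i) (by positivity)

lemma runningAverage_le {u : ℕ → ℝ} {A : ℝ} (hA : 0 ≤ A) (h : ∀ i, u i ≤ A) (n : ℕ) :
    runningAverage u n ≤ A := by
  refine (runningAverage_mono h n).trans ?_
  rcases n.eq_zero_or_pos with rfl | hn
  · simpa [runningAverage] using hA
  · simp [runningAverage, hn.ne']

lemma sub_le_runningAverage_of_sum_lt {a c : ℕ → ℝ} {p ε : ℝ} {n : ℕ} (hn : 0 < n)
    (h : p * ∑ i ∈ Finset.range n, a i - ∑ i ∈ Finset.range n, c i < n * ε) :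
    p * runningAverage a n - ε ≤ runningAverage c n := by
  have hn' : (0 : ℝ) < n := Nat.cast_pos.2 hn
  rw [runningAverage, runningAverage, ← sub_nonneg]
  have : 0 ≤ 1 / (n : ℝ) *
      (n * ε - (p * ∑ i ∈ Finset.range n, a i - ∑ i ∈ Finset.range n, c i)) :=
    mul_nonneg (by positivity) (by linarith)
  convert this using 1
  field_simp
  ring

lemma mul_limsup_liminf_runningAverage_le {a c : ℕ → ℝ} {p A : ℝ} (hp : 0 ≤ p)
    (hc : ∀ i, 0 ≤ c i) (hca : ∀ i, c i ≤ a i) (haA : ∀ i, a i ≤ A)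
    (h : ∀ ε > 0, ∀ᶠ n in atTop, p * runningAverage a n - ε ≤ runningAverage c n) :
    p * limsup (runningAverage a) atTop ≤ limsup (runningAverage c) atTop ∧
      p * liminf (runningAverage a) atTop ≤ liminf (runningAverage c) atTop := by
  have hA : 0 ≤ A := ((hc 0).trans (hca 0)).trans (haA 0)
  have ha_le : IsBoundedUnder (· ≤ ·) atTop (runningAverage a) :=
    isBoundedUnder_of ⟨A, runningAverage_le hA haA⟩
  have ha_ge : IsBoundedUnder (· ≥ ·) atTop (runningAverage a) :=
    isBoundedUnder_of ⟨0, runningAverage_nonneg fun i => (hc i).trans (hca i)⟩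
  have hc_le : IsBoundedUnder (· ≤ ·) atTop (runningAverage c) :=
    isBoundedUnder_of ⟨A, fun n => (runningAverage_mono hca n).trans (runningAverage_le hA haA n)⟩
  exact ⟨mul_limsup_le_limsup hp ha_le ha_ge hc_le h, mul_liminf_le_liminf hp ha_le ha_ge hc_le h⟩

end RunningAverage

/-- Lower-bound half of the paper's Lemma 9: if `X` is a binary process whose conditional
probability of a one given any past (of positive probability) is at least `p`, and `α` is a
bounded sequence of nonnegative reals, then almost surely
`limsup (1/n) ∑_{i<n} α i X i ≥ p * limsup (1/n) ∑_{i<n} α i` and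
`liminf (1/n) ∑_{i<n} α i X i ≥ p * liminf (1/n) ∑_{i<n} α i`. -/
theorem limit_bounds_lower
    {Ω : Type*} [MeasurableSpace Ω] (μ : Measure Ω) [IsProbabilityMeasure μ]
    (p : ℝ) (hp0 : 0 ≤ p) (hp1 : p ≤ 1)
    (X : ℕ → Ω → Bool) (hXmeas : ∀ i, Measurable (X i))
    (hcond : ∀ i : ℕ, ∀ x : Fin i → Bool,
      μ {ω | ∀ j : Fin i, X (j : ℕ) ω = x j} ≠ 0 →
      μ ({ω | X i ω = true} ∩ {ω | ∀ j : Fin i, X (j : ℕ) ω = x j})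
        ≥ ENNReal.ofReal p * μ {ω | ∀ j : Fin i, X (j : ℕ) ω = x j})
    (α : ℕ → ℝ) (hαnn : ∀ i, 0 ≤ α i) (hαbd : ∃ A, ∀ i, α i ≤ A) :
    ∀ᵐ ω ∂μ,
      (Filter.limsup
          (fun n : ℕ => (1 / (n : ℝ)) * ∑ i ∈ Finset.range n,
            α i * (if X i ω = true then (1 : ℝ) else 0)) atTop
        ≥ p * Filter.limsup
            (fun n : ℕ => (1 / (n : ℝ)) * ∑ i ∈ Finset.range n, α i) atTop)
      ∧ (Filter.liminf
          (fun n : ℕ => (1 / (n : ℝ)) * ∑ i ∈ Finset.range n,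
            α i * (if X i ω = true then (1 : ℝ) else 0)) atTop
        ≥ p * Filter.liminf
            (fun n : ℕ => (1 / (n : ℝ)) * ∑ i ∈ Finset.range n, α i) atTop) := by
  obtain ⟨A₀, hA₀⟩ := hαbd
  have hαA (i : ℕ) : α i ≤ max A₀ 1 := (hA₀ i).trans (le_max_left _ _)
  have hcond' : BinaryProcess.CondProbTrueGE μ X p := fun n x =>
    mul_measureReal_le_measureReal_inter hp0 (measure_ne_top _ _)
      (by simpa only [BinaryProcess.preimage_history_singleton] using hcond n x)
  filter_upwards [BinaryProcess.ae_forall_eventually_shortfall_lt hXmeas hp0 hp1 hcond' hαnn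
    (lt_max_of_lt_right one_pos) hαA] with ω hω
  refine mul_limsup_liminf_runningAverage_le hp0 (fun i => ?_) (fun i => ?_) hαA fun ε hε => ?_
  · split_ifs <;> simp [hαnn i]
  · split_ifs <;> simp [hαnn i]
  · filter_upwards [hω ε hε, eventually_gt_atTop 0] with n hn hn0
    exact sub_le_runningAverage_of_sum_lt hn0 (BinaryProcess.shortfall_history α p ω ▸ hn)
end

section
/- Let x^∞ be a sequence over a finite alphabet 𝒳. Then both limits lim_{k→∞} limsup_{n→∞} (1/k) Ĥ^k(x^n) and lim_{k→∞} liminf_{n→∞} (1/k) Ĥ^k(x^n) exist (i.e., for the block-by-block empirical entropy per symbol, the limsup-in-k of the limsup-in-n equals its liminf-in-k, and likewise for the liminf-in-n version). -/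
open Filter

/-- Base-2 Shannon entropy of a finitely-supported distribution given as a function. -/
noncomputable def ent2 {β : Type*} [Fintype β] (q : β → ℝ) : ℝ :=
  ∑ b, -(q b * Real.logb 2 (q b))

/-- The `k`-th order block-by-block empirical distribution of `x^n`: the fraction of the
`⌊n/k⌋` disjoint `k`-blocks of `x^n` equal to a given word `w`. -/
noncomputable def blockDist {𝒳 : Type*} [DecidableEq 𝒳] (x : ℕ → 𝒳) (k n : ℕ)
    (w : Fin k → 𝒳) : ℝ :=
  (((Finset.range (n / k)).filter
      (fun i => (fun j : Fin k => x (k * i + (j : ℕ))) = w)).card : ℝ) / ((n / k : ℕ) : ℝ)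

/-- The `k`-th order block-by-block empirical entropy `Ĥ^k(x^n)` (base 2). -/
noncomputable def Hblock {𝒳 : Type*} [Fintype 𝒳] [DecidableEq 𝒳] (x : ℕ → 𝒳) (k n : ℕ) : ℝ :=
  ent2 (blockDist x k n)

/-- The `k`-th order sliding-window empirical distribution of `x^n`: the fraction of the
`n−k+1` length-`k` windows of `x^n` equal to a given word `w`. -/
noncomputable def swDist {𝒳 : Type*} [DecidableEq 𝒳] (x : ℕ → 𝒳) (k n : ℕ)
    (w : Fin k → 𝒳) : ℝ :=
  (((Finset.range (n - k + 1)).filter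
      (fun i => (fun j : Fin k => x (i + (j : ℕ))) = w)).card : ℝ) / ((n - k + 1 : ℕ) : ℝ)

/-- The `k`-th order sliding-window empirical entropy `Ĥ^k_sw(x^n)` (base 2). -/
noncomputable def Hsw {𝒳 : Type*} [Fintype 𝒳] [DecidableEq 𝒳] (x : ℕ → 𝒳) (k n : ℕ) : ℝ :=
  ent2 (swDist x k n)

/-!
For `k ≤ k'` and large `n`, `(1/k') Ĥ^{k'}(x^n) ≤ (1 + 1/k') ((1/k) Ĥ^k(x^n) + 1/k) + O_k(1/k')`.
This is a coding argument: each `k'`-block of `x^n` is encoded by naming the offset of the `k`-grid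
inside it (`log k` bits), the `k`-blocks of the grid that it contains with a code for the `k`-th
order empirical distribution mixed with the uniform one (one extra bit per `k`-block), and its at
most `2k` remaining letters uniformly; Gibbs' inequality turns this code length into a bound on
`Ĥ^{k'}`. Passing to the limsup (or liminf) in `n`, the resulting sequence `u` satisfies
`u_{k'} ≤ u_k + 1/k + D_k/k'`, hence `limsup u ≤ u_k + 1/k` for every `k`, and a bounded sequence
with this property converges.
-/

open Finset Real

section Entropy

variable {β : Type*} [Fintype β]

lemma ent2_nonneg {p : β → ℝ} (h0 : ∀ b, 0 ≤ p b) (h1 : ∀ b, p b ≤ 1) : 0 ≤ ent2 p :=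
  sum_nonneg fun b _ =>
    neg_nonneg.mpr (mul_nonpos_of_nonneg_of_nonpos (h0 b) (logb_nonpos one_lt_two (h0 b) (h1 b)))

lemma ent2_le_sum_neg_mul_logb {p q : β → ℝ} (hp : ∀ b, 0 ≤ p b) (hp1 : ∑ b, p b = 1)
    (hq : ∀ b, 0 < q b) (hq1 : ∑ b, q b ≤ 1) :
    ent2 p ≤ ∑ b, p b * -logb 2 (q b) := by
  have hlog2 : 0 < log 2 := log_pos one_lt_two
  have hterm : ∀ b, -(p b * logb 2 (p b)) ≤ -(p b * logb 2 (q b)) + (q b - p b) / log 2 := by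
    intro b
    rcases (hp b).eq_or_lt with h | h
    · simp [← h, div_nonneg (hq b).le hlog2.le]
    · have hlog : log (q b / p b) ≤ q b / p b - 1 := log_le_sub_one_of_pos (div_pos (hq b) h)
      rw [log_div (hq b).ne' h.ne'] at hlog
      have hmul : p b * (log (q b) - log (p b)) ≤ q b - p b := by
        calc p b * (log (q b) - log (p b)) ≤ p b * (q b / p b - 1) := by gcongr
          _ = q b - p b := by field_simp
      rw [← sub_nonneg, show -(p b * logb 2 (q b)) + (q b - p b) / log 2 - -(p b * logb 2 (p b))
        = (q b - p b - p b * (log (q b) - log (p b))) / log 2 by simp only [logb]; ring]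
      exact div_nonneg (by linarith) hlog2.le
  calc ent2 p ≤ ∑ b, (-(p b * logb 2 (q b)) + (q b - p b) / log 2) := sum_le_sum fun b _ => hterm b
    _ = ∑ b, -(p b * logb 2 (q b)) + (∑ b, q b - 1) / log 2 := by
      rw [sum_add_distrib, ← sum_div, sum_sub_distrib, hp1]
    _ ≤ ∑ b, p b * -logb 2 (q b) := by
      simp only [mul_neg]
      linarith [div_nonpos_of_nonpos_of_nonneg (sub_nonpos.mpr hq1) hlog2.le]

lemma ent2_le_logb_card [Nonempty β] {p : β → ℝ} (hp : ∀ b, 0 ≤ p b) (hp1 : ∑ b, p b = 1) :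
    ent2 p ≤ logb 2 (Fintype.card β) := by
  have hcard : (0 : ℝ) < Fintype.card β := by exact_mod_cast Fintype.card_pos
  calc ent2 p ≤ ∑ b, p b * -logb 2 (Fintype.card β : ℝ)⁻¹ :=
        ent2_le_sum_neg_mul_logb hp hp1 (fun _ => inv_pos.mpr hcard) (by simp)
    _ = logb 2 (Fintype.card β) := by simp [logb_inv, ← sum_mul, hp1]

lemma sum_mul_neg_logb_half_add_le {p r : β → ℝ} (hp : ∀ b, 0 ≤ p b) (hp1 : ∑ b, p b = 1)
    (hr : ∀ b, 0 < r b) :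
    ∑ b, p b * -logb 2 ((p b + r b) / 2) ≤ ent2 p + 1 := by
  have hterm : ∀ b, p b * -logb 2 ((p b + r b) / 2) ≤ -(p b * logb 2 (p b)) + p b := by
    intro b
    rcases (hp b).eq_or_lt with h | h
    · simp [← h]
    · have hle : logb 2 (p b / 2) ≤ logb 2 ((p b + r b) / 2) :=
        logb_le_logb_of_le one_lt_two (by positivity) (by linarith [hr b])
      rw [logb_div h.ne' two_ne_zero, logb_self_eq_one one_lt_two] at hle
      nlinarith
  calc ∑ b, p b * -logb 2 ((p b + r b) / 2) ≤ ∑ b, (-(p b * logb 2 (p b)) + p b) :=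
        sum_le_sum fun b _ => hterm b
    _ = ent2 p + 1 := by rw [sum_add_distrib, hp1]; rfl

lemma neg_logb_sum_div_card_le {c : β → ℝ} (hc : ∀ s, 0 < c s) (s : β) :
    -logb 2 ((∑ s, c s) / Fintype.card β) ≤ logb 2 (Fintype.card β) - logb 2 (c s) := by
  have hβ : (0 : ℝ) < Fintype.card β := by
    have : Nonempty β := ⟨s⟩
    exact_mod_cast Fintype.card_pos
  have hle : logb 2 (c s) ≤ logb 2 (∑ s, c s) :=
    logb_le_logb_of_le one_lt_two (hc s) (single_le_sum (fun s _ => (hc s).le) (mem_univ s))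
  rw [logb_div (sum_pos (fun s _ => hc s) ⟨s, mem_univ s⟩).ne' hβ.ne']
  linarith

end Entropy

section Windows

variable {ι κ τ α : Type*} [Fintype ι] [Fintype κ] [Fintype τ] [Fintype α]

lemma sum_comp_embedding [DecidableEq ι] [DecidableEq κ] {R : Type*} [AddCommMonoid R] (e : κ ↪ ι)
    (G : (κ → α) → R) :
    ∑ w : ι → α, G (w ∘ e) = (Fintype.card α ^ (Fintype.card ι - Fintype.card κ)) • ∑ v, G v := by
  classical
  let E := Equiv.piEquivPiSubtypeProd (· ∈ Set.range e) (fun _ : ι => α)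
  let φ : κ ≃ Set.range e := Equiv.ofInjective e e.injective
  have hcomp : ∀ a b, E.symm (a, b) ∘ e = a ∘ φ := fun a b => by
    funext j
    simp [E, φ, Equiv.piEquivPiSubtypeProd]
  rw [← E.symm.sum_comp, Fintype.sum_prod_type, Finset.sum_comm]
  simp only [hcomp, sum_const, card_univ]
  rw [Fintype.sum_equiv (φ.arrowCongr (Equiv.refl α)).symm (fun a => G (a ∘ φ)) G (fun a => rfl),
    Fintype.card_fun, Fintype.card_subtype_compl, Fintype.card_congr φ.symm]

lemma sum_prod_comp_curry [DecidableEq κ] [DecidableEq τ] {R : Type*} [CommSemiring R]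
    (F : (τ → α) → R) :
    ∑ v : κ × τ → α, ∏ j, F (fun t => v (j, t)) = (∑ u, F u) ^ Fintype.card κ := by
  rw [← (Equiv.curry κ τ α).symm.sum_comp, ← card_univ, ← prod_const, Fintype.prod_sum]
  rfl

lemma sum_prod_comp_windows [DecidableEq ι] [DecidableEq κ] [DecidableEq τ] {R : Type*}
    [CommSemiring R] (e : κ × τ ↪ ι) (F : (τ → α) → R) :
    ∑ w : ι → α, ∏ j, F (fun t => w (e (j, t)))
      = Fintype.card α ^ (Fintype.card ι - Fintype.card κ * Fintype.card τ)
        * (∑ u, F u) ^ Fintype.card κ := by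
  rw [← sum_prod_comp_curry, ← Nat.cast_pow, ← nsmul_eq_mul, ← Fintype.card_prod]
  exact sum_comp_embedding e (fun v => ∏ j, F (fun t => v (j, t)))

end Windows

section Codes

variable {ι κ τ α : Type*} [Fintype ι] [Fintype κ] [Fintype τ] [Fintype α]

/-- The code on `ι`-words that encodes each window `e (j, ·)` with `q` and every other letter
uniformly. -/
noncomputable def windowCode (q : (τ → α) → ℝ) (e : κ × τ ↪ ι) (w : ι → α) : ℝ :=
  (∏ j, q (fun t => w (e (j, t))))
    / (Fintype.card α : ℝ) ^ (Fintype.card ι - Fintype.card κ * Fintype.card τ)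

variable [Nonempty α]

lemma windowCode_pos {q : (τ → α) → ℝ} (hq : ∀ u, 0 < q u) (e : κ × τ ↪ ι) (w : ι → α) :
    0 < windowCode q e w :=
  div_pos (prod_pos fun j _ => hq _) (pow_pos (by exact_mod_cast Fintype.card_pos) _)

lemma sum_windowCode [DecidableEq ι] [DecidableEq κ] [DecidableEq τ] {q : (τ → α) → ℝ}
    (hq : ∑ u, q u = 1) (e : κ × τ ↪ ι) :
    ∑ w, windowCode q e w = 1 := by
  have hα : (0 : ℝ) < Fintype.card α := by exact_mod_cast Fintype.card_pos
  simp only [windowCode, ← sum_div, sum_prod_comp_windows, hq, one_pow, mul_one]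
  exact div_self (by positivity)

lemma neg_logb_windowCode {q : (τ → α) → ℝ} (hq : ∀ u, 0 < q u) (e : κ × τ ↪ ι) (w : ι → α) :
    -logb 2 (windowCode q e w)
      = (Fintype.card ι - Fintype.card κ * Fintype.card τ : ℕ) * logb 2 (Fintype.card α)
        + ∑ j, -logb 2 (q (fun t => w (e (j, t)))) := by
  have hα : (0 : ℝ) < Fintype.card α := by exact_mod_cast Fintype.card_pos
  rw [windowCode, logb_div (prod_pos fun j _ => hq _).ne' (by positivity), logb_pow,
    logb_prod _ _ fun j _ => (hq _).ne', sum_neg_distrib]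
  ring

end Codes

def consecutiveWindows {k m L : ℕ} (s : ℕ) (h : s + m * k ≤ L) : Fin m × Fin k ↪ Fin L :=
  finProdFinEquiv.toEmbedding.trans ((Fin.natAddEmb s).trans (Fin.castLEEmb h))

@[simp]
lemma coe_consecutiveWindows {k m L : ℕ} (s : ℕ) (h : s + m * k ≤ L) (j : Fin m) (t : Fin k) :
    (consecutiveWindows s h (j, t) : ℕ) = s + k * j + t := by
  simp only [consecutiveWindows, finProdFinEquiv, Function.Embedding.trans_apply,
    Function.Embedding.coeFn_mk, Equiv.coe_fn_mk, Fin.natAddEmb_apply, Fin.natAdd_mk,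
    Fin.castLEEmb_apply, Fin.castLE_mk]
  ring

lemma Nat.add_sub_div_mul_le {s L : ℕ} (k : ℕ) (h : s ≤ L) : s + (L - s) / k * k ≤ L := by
  have := Nat.div_mul_le_self (L - s) k
  omega

lemma Nat.exists_mul_eq_add_of_lt {k : ℕ} (hk : 0 < k) (a : ℕ) : ∃ c s, s < k ∧ k * c = a + s := by
  rcases Nat.eq_zero_or_pos (a % k) with h | h
  · exact ⟨a / k, 0, hk, by rw [add_zero, Nat.mul_div_cancel' (Nat.dvd_of_mod_eq_zero h)]⟩
  · refine ⟨a / k + 1, k - a % k, by omega, ?_⟩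
    have := Nat.div_add_mod a k
    have := Nat.mod_lt a hk
    rw [mul_add, mul_one]
    omega

lemma Nat.mul_div_le_succ_mul_div {k k' n : ℕ} (hkk : k ≤ k') (hn : k' * (k' + 1) ≤ n) :
    k * (n / k) ≤ (k' + 1) * (n / k') := by
  rcases Nat.eq_zero_or_pos k' with rfl | hk'
  · simp [Nat.le_zero.mp hkk]
  have h1 := Nat.mul_div_le n k
  have h2 := Nat.lt_mul_div_succ n hk'
  have h3 : k' ≤ n / k' := (Nat.le_div_iff_mul_le hk').mpr (by nlinarith)
  rw [mul_add, mul_one] at h2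
  rw [add_mul, one_mul]
  omega

lemma Finset.sum_range_sum_Ico_eq {M : Type*} [AddCommMonoid M] {f : ℕ → ℕ} (hf : Monotone f)
    (φ : ℕ → M) (N : ℕ) :
    ∑ i ∈ range N, ∑ g ∈ Ico (f i) (f (i + 1)), φ g = ∑ g ∈ Ico (f 0) (f N), φ g := by
  induction N with
  | zero => simp
  | succ N ih =>
    rw [sum_range_succ, ih, sum_Ico_consecutive _ (hf (Nat.zero_le N)) (hf N.le_succ)]

section AlignedCode

variable {α : Type*} [Fintype α] {k k' : ℕ} (hkk : k ≤ k')

def alignedWindows (s : Fin k) : Fin ((k' - s) / k) × Fin k ↪ Fin k' :=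
  consecutiveWindows s (Nat.add_sub_div_mul_le k (s.isLt.le.trans hkk))

/-- Averaging over the `k` possible offsets of the `k`-grid costs only `log k` bits. -/
noncomputable def alignedCode (q : (Fin k → α) → ℝ) (w : Fin k' → α) : ℝ :=
  (∑ s, windowCode q (alignedWindows hkk s) w) / k

variable [Nonempty α] {hkk} {q : (Fin k → α) → ℝ}

lemma alignedCode_pos (hk : 0 < k) (hq : ∀ u, 0 < q u) (w : Fin k' → α) :
    0 < alignedCode hkk q w :=
  div_pos (sum_pos (fun s _ => windowCode_pos hq _ w) ⟨⟨0, hk⟩, mem_univ _⟩)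
    (by exact_mod_cast hk)

lemma sum_alignedCode [DecidableEq α] (hk : 0 < k) (hq : ∑ u, q u = 1) :
    ∑ w, alignedCode hkk q w = 1 := by
  simp only [alignedCode, ← sum_div]
  rw [sum_comm]
  simp only [sum_windowCode hq, sum_const, card_univ, Fintype.card_fin, nsmul_eq_mul, mul_one]
  exact div_self (by exact_mod_cast hk.ne')

lemma neg_logb_alignedCode_le (hq : ∀ u, 0 < q u) (w : Fin k' → α) (s : Fin k) :
    -logb 2 (alignedCode hkk q w)
      ≤ logb 2 k + 2 * k * logb 2 (Fintype.card α)
        + ∑ j, -logb 2 (q (fun t => w (alignedWindows hkk s (j, t)))) := by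
  have hgap : k' - (k' - s) / k * k ≤ 2 * k := by
    have := Nat.div_add_mod (k' - s) k
    have := Nat.mod_lt (k' - s) s.pos
    have := s.isLt
    rw [mul_comm]
    omega
  have hcost : ((k' - (k' - s) / k * k : ℕ) : ℝ) * logb 2 (Fintype.card α)
      ≤ 2 * k * logb 2 (Fintype.card α) := by
    gcongr
    · exact logb_nonneg one_lt_two (by exact_mod_cast Fintype.card_pos)
    · exact_mod_cast hgap
  have hmix := neg_logb_sum_div_card_le (fun s => windowCode_pos hq (alignedWindows hkk s) w) s
  rw [sub_eq_add_neg, neg_logb_windowCode hq] at hmix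
  simp only [Fintype.card_fin] at hmix
  rw [alignedCode]
  linarith

end AlignedCode

section Blocks

variable {𝒳 : Type*} [DecidableEq 𝒳] (x : ℕ → 𝒳)

def block (k i : ℕ) : Fin k → 𝒳 := fun j => x (k * i + j)

lemma blockDist_eq (k n : ℕ) (w : Fin k → 𝒳) :
    blockDist x k n w = (#{i ∈ range (n / k) | block x k i = w} : ℝ) / (n / k : ℕ) :=
  rfl

lemma blockDist_nonneg (k n : ℕ) (w : Fin k → 𝒳) : 0 ≤ blockDist x k n w := by
  rw [blockDist_eq]
  positivity

lemma blockDist_le_one (k n : ℕ) (w : Fin k → 𝒳) : blockDist x k n w ≤ 1 := by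
  rw [blockDist_eq]
  refine div_le_one_of_le₀ ?_ (Nat.cast_nonneg _)
  exact_mod_cast (card_filter_le _ _).trans (card_range _).le

variable [Fintype 𝒳]

lemma sum_blockDist_mul (k n : ℕ) (f : (Fin k → 𝒳) → ℝ) :
    ∑ w, blockDist x k n w * f w = (∑ i ∈ range (n / k), f (block x k i)) / (n / k : ℕ) := by
  rw [← sum_fiberwise (range (n / k)) (block x k), sum_div]
  refine sum_congr rfl fun w _ => ?_
  rw [sum_congr rfl fun i hi => by rw [(mem_filter.mp hi).2], sum_const, nsmul_eq_mul,
    blockDist_eq]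
  ring

lemma sum_blockDist {k n : ℕ} (h : 0 < n / k) : ∑ w, blockDist x k n w = 1 := by
  have hN : ((n / k : ℕ) : ℝ) ≠ 0 := Nat.cast_ne_zero.mpr h.ne'
  simpa [hN] using sum_blockDist_mul x k n 1

lemma Hblock_nonneg (k n : ℕ) : 0 ≤ Hblock x k n :=
  ent2_nonneg (blockDist_nonneg x k n) (blockDist_le_one x k n)

lemma Hblock_le (k n : ℕ) : Hblock x k n ≤ k * logb 2 (Fintype.card 𝒳) := by
  have : Nonempty 𝒳 := ⟨x 0⟩
  rcases Nat.eq_zero_or_pos (n / k) with h | h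
  · have hzero : blockDist x k n = 0 := funext fun w => by simp [blockDist_eq, h]
    simp only [Hblock, hzero, ent2, Pi.zero_apply, zero_mul, neg_zero, sum_const_zero]
    exact mul_nonneg k.cast_nonneg (logb_nonneg one_lt_two (by exact_mod_cast Fintype.card_pos))
  · calc Hblock x k n ≤ logb 2 (Fintype.card (Fin k → 𝒳)) :=
          ent2_le_logb_card (blockDist_nonneg x k n) (sum_blockDist x h)
      _ = k * logb 2 (Fintype.card 𝒳) := by simp [logb_pow]

noncomputable def smoothedBlockDist (k n : ℕ) (w : Fin k → 𝒳) : ℝ :=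
  (blockDist x k n w + (Fintype.card (Fin k → 𝒳) : ℝ)⁻¹) / 2

lemma smoothedBlockDist_pos (k n : ℕ) (w : Fin k → 𝒳) : 0 < smoothedBlockDist x k n w := by
  have : Nonempty 𝒳 := ⟨x 0⟩
  have : (0 : ℝ) < (Fintype.card (Fin k → 𝒳) : ℝ)⁻¹ :=
    inv_pos.mpr (by exact_mod_cast Fintype.card_pos)
  rw [smoothedBlockDist]
  linarith [blockDist_nonneg x k n w]

lemma smoothedBlockDist_le_one (k n : ℕ) (w : Fin k → 𝒳) : smoothedBlockDist x k n w ≤ 1 := by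
  have : Nonempty 𝒳 := ⟨x 0⟩
  have : (Fintype.card (Fin k → 𝒳) : ℝ)⁻¹ ≤ 1 :=
    inv_le_one_of_one_le₀ (by exact_mod_cast Fintype.card_pos)
  rw [smoothedBlockDist]
  linarith [blockDist_le_one x k n w]

lemma sum_smoothedBlockDist {k n : ℕ} (h : 0 < n / k) : ∑ w, smoothedBlockDist x k n w = 1 := by
  have : Nonempty 𝒳 := ⟨x 0⟩
  have hcard : (Fintype.card (Fin k → 𝒳) : ℝ) ≠ 0 := by exact_mod_cast Fintype.card_ne_zero
  simp only [smoothedBlockDist, ← sum_div, sum_add_distrib, sum_blockDist x h, sum_const,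
    card_univ, nsmul_eq_mul, mul_inv_cancel₀ hcard]
  norm_num

end Blocks

section Coding

variable {𝒳 : Type*} (x : ℕ → 𝒳) {k k' : ℕ}

lemma window_block_eq (hkk : k ≤ k') {i c : ℕ} (s : Fin k) (hc : k * c = k' * i + s)
    (j : Fin ((k' - s) / k)) :
    (fun t => block x k' i (alignedWindows hkk s (j, t))) = block x k (c + j) := by
  funext t
  simp only [block, alignedWindows, coe_consecutiveWindows]
  rw [mul_add, hc]
  ring_nf

variable [Fintype 𝒳]

/-- The `k'`-block `i` contains the `k`-blocks with indices in `[⌈k' i / k⌉, ⌊k' (i + 1) / k⌋)`. -/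
lemma neg_logb_alignedCode_block_le (hk : 0 < k) (hkk : k ≤ k') {q : (Fin k → 𝒳) → ℝ}
    (hq : ∀ u, 0 < q u) (hq1 : ∀ u, q u ≤ 1) (i : ℕ) :
    -logb 2 (alignedCode hkk q (block x k' i))
      ≤ logb 2 k + 2 * k * logb 2 (Fintype.card 𝒳)
        + ∑ g ∈ Ico (k' * i / k) (k' * (i + 1) / k), -logb 2 (q (block x k g)) := by
  have : Nonempty 𝒳 := ⟨x 0⟩
  obtain ⟨c, s, hs, hc⟩ := Nat.exists_mul_eq_add_of_lt hk (k' * i)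
  have hstart : k' * i / k ≤ c := Nat.div_le_of_le_mul (by omega)
  have hend : c + (k' - s) / k ≤ k' * (i + 1) / k := by
    rw [Nat.le_div_iff_mul_le hk]
    have := Nat.add_sub_div_mul_le k (hs.le.trans hkk)
    rw [add_mul, mul_comm c, hc, mul_add, mul_one]
    omega
  refine (neg_logb_alignedCode_le hq _ ⟨s, hs⟩).trans (add_le_add_right ?_ _)
  simp only [window_block_eq x hkk ⟨s, hs⟩ hc]
  rw [Fin.sum_univ_eq_sum_range (fun j => -logb 2 (q (block x k (c + j)))),
    ← Nat.add_sub_cancel_left (n := c) (m := (k' - s) / k),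
    ← sum_Ico_eq_sum_range (fun g => -logb 2 (q (block x k g)))]
  refine sum_le_sum_of_subset_of_nonneg (Ico_subset_Ico hstart hend) fun g _ _ => ?_
  exact neg_nonneg.mpr (logb_nonpos one_lt_two (hq _).le (hq1 _))

variable [DecidableEq 𝒳] {n : ℕ}

lemma Hblock_le_of_le (hk : 0 < k) (hkk : k ≤ k') (hn : k' ≤ n) :
    Hblock x k' n ≤ logb 2 k + 2 * k * logb 2 (Fintype.card 𝒳)
      + (n / k : ℕ) / (n / k' : ℕ) * (Hblock x k n + 1) := by
  have : Nonempty 𝒳 := ⟨x 0⟩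
  have hN' : 0 < n / k' := Nat.div_pos hn (hk.trans_le hkk)
  have hN : 0 < n / k := Nat.div_pos (hkk.trans hn) hk
  set q := smoothedBlockDist x k n
  have hq : ∀ w, 0 < q w := smoothedBlockDist_pos x k n
  have hq1 : ∀ w, q w ≤ 1 := smoothedBlockDist_le_one x k n
  set A := logb 2 k + 2 * k * logb 2 (Fintype.card 𝒳)
  set φ : ℕ → ℝ := fun g => -logb 2 (q (block x k g))
  have hφ : ∀ g, 0 ≤ φ g := fun g => neg_nonneg.mpr (logb_nonpos one_lt_two (hq _).le (hq1 _))
  have hgrid : k' * (n / k') / k ≤ n / k := Nat.div_le_div_right (Nat.mul_div_le n k')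
  calc Hblock x k' n
      ≤ ∑ w, blockDist x k' n w * -logb 2 (alignedCode hkk q w) :=
        ent2_le_sum_neg_mul_logb (blockDist_nonneg x k' n) (sum_blockDist x hN')
          (alignedCode_pos hk hq) (sum_alignedCode hk (sum_smoothedBlockDist x hN)).le
    _ = (∑ i ∈ range (n / k'), -logb 2 (alignedCode hkk q (block x k' i))) / (n / k' : ℕ) :=
        sum_blockDist_mul x k' n _
    _ ≤ (∑ i ∈ range (n / k'), (A + ∑ g ∈ Ico (k' * i / k) (k' * (i + 1) / k), φ g))
          / (n / k' : ℕ) := by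
        gcongr with i
        exact neg_logb_alignedCode_block_le x hk hkk hq hq1 i
    _ = ((n / k' : ℕ) * A + ∑ g ∈ Ico 0 (k' * (n / k') / k), φ g) / (n / k' : ℕ) := by
        rw [sum_add_distrib, sum_const, card_range, nsmul_eq_mul,
          sum_range_sum_Ico_eq (fun a b h => Nat.div_le_div_right (Nat.mul_le_mul_left k' h))]
        simp
    _ ≤ ((n / k' : ℕ) * A + ∑ g ∈ range (n / k), φ g) / (n / k' : ℕ) := by
        gcongr (_ + ?_) / _
        rw [range_eq_Ico]
        exact sum_le_sum_of_subset_of_nonneg (Ico_subset_Ico_right hgrid) fun g _ _ => hφ g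
    _ = A + (n / k : ℕ) / (n / k' : ℕ) * ∑ w, blockDist x k n w * -logb 2 (q w) := by
        rw [sum_blockDist_mul x k n]
        field_simp
        rfl
    _ ≤ A + (n / k : ℕ) / (n / k' : ℕ) * (Hblock x k n + 1) := by
        gcongr
        exact sum_mul_neg_logb_half_add_le (blockDist_nonneg x k n) (sum_blockDist x hN)
          fun _ => inv_pos.mpr (by exact_mod_cast Fintype.card_pos)

end Coding

section Limits

open Filter Topology

variable {ι : Type*} {l : Filter ι} {f g : ι → ℝ}

lemma limsup_le_add_mul_limsup [l.NeBot] {a b : ℝ} (hb : 0 ≤ b) (hf : IsBoundedUnder (· ≥ ·) l f)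
    (hg : IsBoundedUnder (· ≤ ·) l g) (hg' : IsBoundedUnder (· ≥ ·) l g)
    (h : ∀ᶠ i in l, f i ≤ a + b * g i) :
    limsup f l ≤ a + b * limsup g l := by
  have hmono : Monotone fun t => a + b * t := fun s t hst => by dsimp only; gcongr
  rw [hmono.map_limsup_of_continuousAt g (by fun_prop) hg hg'.isCoboundedUnder_le]
  exact limsup_le_limsup h hf.isCoboundedUnder_le (hmono.isBoundedUnder_le_comp hg)

lemma liminf_le_add_mul_liminf [l.NeBot] {a b : ℝ} (hb : 0 ≤ b) (hf : IsBoundedUnder (· ≥ ·) l f)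
    (hg : IsBoundedUnder (· ≤ ·) l g) (hg' : IsBoundedUnder (· ≥ ·) l g)
    (h : ∀ᶠ i in l, f i ≤ a + b * g i) :
    liminf f l ≤ a + b * liminf g l := by
  have hmono : Monotone fun t => a + b * t := fun s t hst => by dsimp only; gcongr
  rw [hmono.map_liminf_of_continuousAt g (by fun_prop) hg.isCoboundedUnder_ge hg']
  exact liminf_le_liminf h hf (hmono.isBoundedUnder_le_comp hg).isCoboundedUnder_ge

lemma limsup_le_of_le_add_of_tendsto_zero [l.NeBot] {δ : ι → ℝ} {a : ℝ}
    (hf : IsBoundedUnder (· ≥ ·) l f) (hδ : Tendsto δ l (𝓝 0)) (h : ∀ᶠ i in l, f i ≤ a + δ i) :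
    limsup f l ≤ a := by
  have hlim : Tendsto (fun i => a + δ i) l (𝓝 a) := by simpa using tendsto_const_nhds.add hδ
  exact (limsup_le_limsup h hf.isCoboundedUnder_le hlim.isBoundedUnder_le).trans_eq hlim.limsup_eq

lemma tendsto_limsup_of_limsup_le_add [l.NeBot] {ε : ι → ℝ} (hf : IsBoundedUnder (· ≤ ·) l f)
    (hf' : IsBoundedUnder (· ≥ ·) l f) (hε : Tendsto ε l (𝓝 0))
    (h : ∀ᶠ i in l, limsup f l ≤ f i + ε i) :
    Tendsto f l (𝓝 (limsup f l)) := by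
  have hlim : Tendsto (fun i => limsup f l - ε i) l (𝓝 (limsup f l)) := by
    simpa using tendsto_const_nhds.sub hε
  refine tendsto_of_le_liminf_of_limsup_le ?_ le_rfl hf hf'
  calc limsup f l = liminf (fun i => limsup f l - ε i) l := hlim.liminf_eq.symm
    _ ≤ liminf f l :=
      liminf_le_liminf (h.mono fun i hi => by linarith) hlim.isBoundedUnder_ge
        hf.isCoboundedUnder_ge

lemma limsup_mem_Icc [l.NeBot] {a b : ℝ} (h : ∀ i, f i ∈ Set.Icc a b) : limsup f l ∈ Set.Icc a b :=
  ⟨le_limsup_of_frequently_le (Frequently.of_forall fun i => (h i).1)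
      (isBoundedUnder_of ⟨b, fun i => (h i).2⟩),
    limsup_le_of_le (isBoundedUnder_of ⟨a, fun i => (h i).1⟩).isCoboundedUnder_le
      (Eventually.of_forall fun i => (h i).2)⟩

lemma liminf_mem_Icc [l.NeBot] {a b : ℝ} (h : ∀ i, f i ∈ Set.Icc a b) : liminf f l ∈ Set.Icc a b :=
  ⟨le_liminf_of_le (isBoundedUnder_of ⟨b, fun i => (h i).2⟩).isCoboundedUnder_ge
      (Eventually.of_forall fun i => (h i).1),
    liminf_le_of_frequently_le (Frequently.of_forall fun i => (h i).2)
      (isBoundedUnder_of ⟨a, fun i => (h i).1⟩)⟩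

end Limits

section BlockRate

open Filter

variable {𝒳 : Type*} [Fintype 𝒳] [DecidableEq 𝒳] (x : ℕ → 𝒳) {k k' : ℕ}

noncomputable def blockRate (k n : ℕ) : ℝ := 1 / (k : ℝ) * Hblock x k n

lemma blockRate_mem_Icc (k n : ℕ) : blockRate x k n ∈ Set.Icc 0 (logb 2 (Fintype.card 𝒳)) := by
  have : Nonempty 𝒳 := ⟨x 0⟩
  refine ⟨mul_nonneg (by positivity) (Hblock_nonneg x k n), ?_⟩
  rw [blockRate, one_div_mul_eq_div]
  exact div_le_of_le_mul₀ k.cast_nonneg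
    (logb_nonneg one_lt_two (by exact_mod_cast Fintype.card_pos))
    ((Hblock_le x k n).trans_eq (mul_comm _ _))

lemma blockRate_eventually_le (hk : 0 < k) (hkk : k ≤ k') :
    ∀ᶠ n in atTop, blockRate x k' n
      ≤ ((logb 2 k + 2 * k * logb 2 (Fintype.card 𝒳)) / k' + (1 + 1 / (k' : ℝ)) / k)
        + (1 + 1 / (k' : ℝ)) * blockRate x k n := by
  filter_upwards [eventually_ge_atTop (k' * (k' + 1))] with n hn
  have hk' : (0 : ℝ) < k' := by exact_mod_cast hk.trans_le hkk
  have hN' : (0 : ℝ) < (n / k' : ℕ) := by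
    exact_mod_cast Nat.div_pos (le_trans (Nat.le_mul_of_pos_right k' k'.succ_pos) hn)
      (hk.trans_le hkk)
  have hratio : ((n / k : ℕ) : ℝ) / (n / k' : ℕ) ≤ (k' + 1) / k := by
    rw [div_le_div_iff₀ hN' (by exact_mod_cast hk), mul_comm]
    exact_mod_cast Nat.mul_div_le_succ_mul_div hkk hn
  have hH := Hblock_nonneg x k n
  calc blockRate x k' n
      ≤ 1 / k' * (logb 2 k + 2 * k * logb 2 (Fintype.card 𝒳)
          + (n / k : ℕ) / (n / k' : ℕ) * (Hblock x k n + 1)) := by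
        rw [blockRate]
        gcongr
        exact Hblock_le_of_le x hk hkk (le_trans (Nat.le_mul_of_pos_right k' k'.succ_pos) hn)
    _ ≤ 1 / k' * (logb 2 k + 2 * k * logb 2 (Fintype.card 𝒳)
          + (k' + 1) / k * (Hblock x k n + 1)) := by
        gcongr
    _ = _ := by
        rw [blockRate]
        field_simp
        ring

lemma limsup_blockRate_le (hk : 0 < k) (hkk : k ≤ k') :
    limsup (blockRate x k') atTop
      ≤ limsup (blockRate x k) atTop + 1 / k
        + (logb 2 k + 2 * k * logb 2 (Fintype.card 𝒳) + limsup (blockRate x k) atTop + 1 / k)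
          / k' := by
  refine (limsup_le_add_mul_limsup (by positivity : (0 : ℝ) ≤ 1 + 1 / (k' : ℝ))
    (isBoundedUnder_of ⟨0, fun n => (blockRate_mem_Icc x k' n).1⟩)
    (isBoundedUnder_of ⟨_, fun n => (blockRate_mem_Icc x k n).2⟩)
    (isBoundedUnder_of ⟨0, fun n => (blockRate_mem_Icc x k n).1⟩)
    (blockRate_eventually_le x hk hkk)).trans_eq ?_
  ring

lemma liminf_blockRate_le (hk : 0 < k) (hkk : k ≤ k') :
    liminf (blockRate x k') atTop
      ≤ liminf (blockRate x k) atTop + 1 / k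
        + (logb 2 k + 2 * k * logb 2 (Fintype.card 𝒳) + liminf (blockRate x k) atTop + 1 / k)
          / k' := by
  refine (liminf_le_add_mul_liminf (by positivity : (0 : ℝ) ≤ 1 + 1 / (k' : ℝ))
    (isBoundedUnder_of ⟨0, fun n => (blockRate_mem_Icc x k' n).1⟩)
    (isBoundedUnder_of ⟨_, fun n => (blockRate_mem_Icc x k n).2⟩)
    (isBoundedUnder_of ⟨0, fun n => (blockRate_mem_Icc x k n).1⟩)
    (blockRate_eventually_le x hk hkk)).trans_eq ?_
  ring

lemma limsup_limsup_blockRate_le (hk : 0 < k) :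
    limsup (fun k' => limsup (blockRate x k') atTop) atTop
      ≤ limsup (blockRate x k) atTop + 1 / k :=
  limsup_le_of_le_add_of_tendsto_zero
    (isBoundedUnder_of ⟨0, fun k' => (limsup_mem_Icc (blockRate_mem_Icc x k')).1⟩)
    (tendsto_const_div_atTop_nhds_zero_nat _)
    ((eventually_ge_atTop k).mono fun _ hkk => limsup_blockRate_le x hk hkk)

lemma limsup_liminf_blockRate_le (hk : 0 < k) :
    limsup (fun k' => liminf (blockRate x k') atTop) atTop
      ≤ liminf (blockRate x k) atTop + 1 / k :=
  limsup_le_of_le_add_of_tendsto_zero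
    (isBoundedUnder_of ⟨0, fun k' => (liminf_mem_Icc (blockRate_mem_Icc x k')).1⟩)
    (tendsto_const_div_atTop_nhds_zero_nat _)
    ((eventually_ge_atTop k).mono fun _ hkk => liminf_blockRate_le x hk hkk)

end BlockRate

/-- The paper's Lemma 5 (Appendix A): for any sequence over a finite alphabet, the limits
`lim_{k→∞} limsup_{n→∞} (1/k) Ĥ^k(x^n)` and `lim_{k→∞} liminf_{n→∞} (1/k) Ĥ^k(x^n)`
both exist. -/
theorem block_empirical_entropy_limits_exist {𝒳 : Type*} [Fintype 𝒳] [DecidableEq 𝒳]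
    (x : ℕ → 𝒳) :
    (∃ Lsup : ℝ, Tendsto
      (fun k : ℕ => limsup (fun n : ℕ => (1 / (k : ℝ)) * Hblock x k n) atTop) atTop
      (nhds Lsup))
    ∧ (∃ Linf : ℝ, Tendsto
      (fun k : ℕ => liminf (fun n : ℕ => (1 / (k : ℝ)) * Hblock x k n) atTop) atTop
      (nhds Linf)) := by
  have hU k := limsup_mem_Icc (l := atTop) (blockRate_mem_Icc x k)
  have hV k := liminf_mem_Icc (l := atTop) (blockRate_mem_Icc x k)
  exact ⟨⟨_, tendsto_limsup_of_limsup_le_add (isBoundedUnder_of ⟨_, fun k => (hU k).2⟩)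
      (isBoundedUnder_of ⟨_, fun k => (hU k).1⟩) tendsto_one_div_atTop_nhds_zero_nat
      ((eventually_gt_atTop 0).mono fun _ hk => limsup_limsup_blockRate_le x hk)⟩,
    ⟨_, tendsto_limsup_of_limsup_le_add (isBoundedUnder_of ⟨_, fun k => (hV k).2⟩)
      (isBoundedUnder_of ⟨_, fun k => (hV k).1⟩) tendsto_one_div_atTop_nhds_zero_nat
      ((eventually_gt_atTop 0).mono fun _ hk => limsup_liminf_blockRate_le x hk)⟩⟩
end

section
/- Let x^∞ be a sequence over a finite alphabet 𝒳 and fix integers m, N ≥ 1. Then limsup_{n→∞} Ĥ^m(x^n) = limsup_{k→∞} Ĥ^m(x^{kN}) and liminf_{n→∞} Ĥ^m(x^n) = liminf_{k→∞} Ĥ^m(x^{kN}); that is, the limit superior and limit inferior of the m-th order block-by-block empirical entropy are unchanged when computed only along the arithmetic subsequence of times n = kN. -/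
/-!
Put `n' = ⌊n/N⌋·N`. The blocks of `x^n` and of `x^{n'}` agree except for at most `N` of the
`⌊n/m⌋` blocks of `x^n`, so the two empirical distributions are within `N/⌊n/m⌋` in sup norm.
Entropy is uniformly continuous on the compact cube `[0,1]^(𝒳^m)`, hence
`Ĥ^m(x^n) - Ĥ^m(x^{n'}) → 0`, and two bounded sequences with vanishing difference share their
limsup and liminf. Finally `n ↦ ⌊n/N⌋` maps `atTop` onto `atTop`, so `n ↦ Ĥ^m(x^{⌊n/N⌋N})` has
the same limsup and liminf as `k ↦ Ĥ^m(x^{kN})`.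
-/

open Filter

open Topology

section LimsupOfTendstoSub

variable {ι : Type*} {l : Filter ι} [l.NeBot] {u v : ι → ℝ}

theorem limsup_le_limsup_of_tendsto_sub (h : Tendsto (u - v) l (𝓝 0))
    (hv_le : IsBoundedUnder (· ≤ ·) l v) (hv_ge : IsBoundedUnder (· ≥ ·) l v) :
    limsup u l ≤ limsup v l :=
  calc limsup u l = limsup (u - v + v) l := by rw [sub_add_cancel]
    _ ≤ limsup (u - v) l + limsup v l :=
      limsup_add_le h.isBoundedUnder_ge h.isBoundedUnder_le hv_ge.isCoboundedUnder_le hv_le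
    _ = limsup v l := by rw [h.limsup_eq, zero_add]

theorem liminf_le_liminf_of_tendsto_sub (h : Tendsto (u - v) l (𝓝 0))
    (hv_le : IsBoundedUnder (· ≤ ·) l v) (hv_ge : IsBoundedUnder (· ≥ ·) l v) :
    liminf u l ≤ liminf v l :=
  calc liminf u l = liminf (u - v + v) l := by rw [sub_add_cancel]
    _ ≤ limsup (u - v) l + liminf v l :=
      liminf_add_le h.isBoundedUnder_ge h.isBoundedUnder_le hv_ge hv_le.isCoboundedUnder_ge
    _ = liminf v l := by rw [h.limsup_eq, zero_add]

theorem limsup_eq_and_liminf_eq_of_tendsto_sub (h : Tendsto (u - v) l (𝓝 0))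
    (hu_le : IsBoundedUnder (· ≤ ·) l u) (hu_ge : IsBoundedUnder (· ≥ ·) l u)
    (hv_le : IsBoundedUnder (· ≤ ·) l v) (hv_ge : IsBoundedUnder (· ≥ ·) l v) :
    limsup u l = limsup v l ∧ liminf u l = liminf v l := by
  have h' : Tendsto (v - u) l (𝓝 0) := by simpa [Pi.sub_def] using h.neg
  exact ⟨(limsup_le_limsup_of_tendsto_sub h hv_le hv_ge).antisymm
      (limsup_le_limsup_of_tendsto_sub h' hu_le hu_ge),
    (liminf_le_liminf_of_tendsto_sub h hv_le hv_ge).antisymm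
      (liminf_le_liminf_of_tendsto_sub h' hu_le hu_ge)⟩

end LimsupOfTendstoSub

theorem UniformContinuousOn.tendsto_dist_comp {α β ι : Type*} [PseudoMetricSpace α]
    [PseudoMetricSpace β] {f : α → β} {s : Set α} (hf : UniformContinuousOn f s)
    {l : Filter ι} {p q : ι → α} (hp : ∀ i, p i ∈ s) (hq : ∀ i, q i ∈ s)
    (h : Tendsto (fun i => dist (p i) (q i)) l (𝓝 0)) :
    Tendsto (fun i => dist (f (p i)) (f (q i))) l (𝓝 0) := by
  have h' := (tendsto_uniformity_iff_dist_tendsto_zero (f := fun i => (p i, q i))).2 h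
  exact tendsto_uniformity_iff_dist_tendsto_zero.1 <| Tendsto.comp hf <| tendsto_inf.2
    ⟨h', tendsto_principal.2 <| Eventually.of_forall fun i => Set.mk_mem_prod (hp i) (hq i)⟩

theorem Nat.div_le_div_add_sub {a b : ℕ} (hab : a ≤ b) (m : ℕ) : b / m ≤ a / m + (b - a) := by
  rcases m.eq_zero_or_pos with rfl | hm
  · simp
  calc b / m ≤ (a + (b - a) * m) / m := Nat.div_le_div_right (by
      have := Nat.le_mul_of_pos_right (b - a) hm
      omega)
    _ = a / m + (b - a) := Nat.add_mul_div_right _ _ hm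

noncomputable def prefixFreq (P : ℕ → Prop) [DecidablePred P] (q : ℕ) : ℝ :=
  ((Finset.range q).filter P).card / q

section PrefixFreq

variable (P : ℕ → Prop) [DecidablePred P]

theorem prefixFreq_mem_Icc (q : ℕ) : prefixFreq P q ∈ Set.Icc (0 : ℝ) 1 :=
  ⟨by unfold prefixFreq; positivity, div_le_one_of_le₀
    (by simpa using (Finset.card_filter_le (Finset.range q) P : _ ≤ (Finset.range q).card))
    q.cast_nonneg⟩

theorem prefixFreq_mul_cast (q : ℕ) :
    prefixFreq P q * q = ((Finset.range q).filter P).card := by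
  rcases q.eq_zero_or_pos with rfl | hq
  · simp
  exact div_mul_cancel₀ _ (by positivity)

theorem card_filter_range_eq_add {q' q : ℕ} (h : q' ≤ q) :
    ((Finset.range q).filter P).card
      = ((Finset.range q').filter P).card + ((Finset.Ico q' q).filter P).card := by
  simp only [Finset.card_filter]
  exact (Finset.sum_range_add_sum_Ico _ h).symm

theorem abs_prefixFreq_sub_le {q' q : ℕ} (h : q' ≤ q) :
    |prefixFreq P q - prefixFreq P q'| ≤ ((q - q' : ℕ) : ℝ) / q := by
  rcases q.eq_zero_or_pos with rfl | hq
  · simp [Nat.le_zero.1 h]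
  set d := ((Finset.Ico q' q).filter P).card
  have hd : (d : ℝ) ≤ ((q - q' : ℕ) : ℝ) := by
    exact_mod_cast (Finset.card_filter_le _ P).trans (Nat.card_Ico q' q).le
  obtain ⟨ha₀, ha₁⟩ := prefixFreq_mem_Icc P q'
  have hsplit : prefixFreq P q - prefixFreq P q'
      = (d - prefixFreq P q' * ((q - q' : ℕ) : ℝ)) / q := by
    have hq_mul := prefixFreq_mul_cast P q
    have hq'_mul := prefixFreq_mul_cast P q'
    rw [card_filter_range_eq_add P h, Nat.cast_add, ← hq'_mul] at hq_mul
    rw [Nat.cast_sub h, eq_div_iff (by positivity)]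
    linear_combination hq_mul
  rw [hsplit, abs_div, Nat.abs_cast]
  gcongr
  rw [abs_sub_le_iff]
  constructor <;> nlinarith [d.cast_nonneg (α := ℝ)]

end PrefixFreq

theorem continuous_ent2 {β : Type*} [Fintype β] : Continuous (ent2 (β := β)) := by
  have : ent2 (β := β) = fun q => ∑ b, Real.negMulLog (q b) / Real.log 2 := by
    ext q
    simp only [ent2, Real.negMulLog, Real.logb]
    congr 1; ext b; ring
  rw [this]
  fun_prop

theorem uniformContinuousOn_ent2 {β : Type*} [Fintype β] :
    UniformContinuousOn (ent2 (β := β)) (Set.Icc 0 1) :=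
  isCompact_Icc.uniformContinuousOn_of_continuous continuous_ent2.continuousOn

section BlockEntropy

variable {𝒳 : Type*} [DecidableEq 𝒳] (x : ℕ → 𝒳) (m : ℕ)

theorem blockDist_eq_prefixFreq (n : ℕ) (w : Fin m → 𝒳) :
    blockDist x m n w = prefixFreq (fun i => (fun j : Fin m => x (m * i + j)) = w) (n / m) :=
  rfl

theorem blockDist_mem_Icc (n : ℕ) : blockDist x m n ∈ Set.Icc 0 1 :=
  ⟨fun _ => (prefixFreq_mem_Icc _ _).1, fun _ => (prefixFreq_mem_Icc _ _).2⟩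

variable [Fintype 𝒳]

theorem dist_blockDist_le {n' n : ℕ} (h : n' ≤ n) :
    dist (blockDist x m n) (blockDist x m n') ≤ ((n - n' : ℕ) : ℝ) / (n / m : ℕ) := by
  refine (dist_pi_le_iff (by positivity)).2 fun w => ?_
  rw [Real.dist_eq, blockDist_eq_prefixFreq, blockDist_eq_prefixFreq]
  refine (abs_prefixFreq_sub_le _ (Nat.div_le_div_right h)).trans ?_
  have := Nat.div_le_div_add_sub h m
  exact div_le_div_of_nonneg_right (by exact_mod_cast (by omega : n / m - n' / m ≤ n - n'))
    (Nat.cast_nonneg _)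

theorem isBounded_range_Hblock : Bornology.IsBounded (Set.range (Hblock x m)) :=
  (isCompact_Icc.image continuous_ent2).isBounded.subset
    (Set.range_subset_iff.2 fun n => ⟨_, blockDist_mem_Icc x m n, rfl⟩)

theorem tendsto_dist_blockDist_div_mul (hm : 0 < m) {N : ℕ} (hN : 0 < N) :
    Tendsto (fun n => dist (blockDist x m n) (blockDist x m (n / N * N))) atTop (𝓝 0) := by
  have hbound : Tendsto (fun n => (N : ℝ) / (n / m : ℕ)) atTop (𝓝 0) :=
    (tendsto_const_div_atTop_nhds_zero_nat (N : ℝ)).comp (Nat.tendsto_div_const_atTop hm.ne')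
  refine squeeze_zero (fun n => dist_nonneg) (fun n => ?_) hbound
  have hrem : n - n / N * N ≤ N := by
    have := Nat.div_add_mod' n N
    have := Nat.mod_lt n hN
    omega
  exact (dist_blockDist_le x m (Nat.div_mul_le_self n N)).trans
    (div_le_div_of_nonneg_right (by exact_mod_cast hrem) (Nat.cast_nonneg _))

theorem tendsto_Hblock_sub_Hblock_div_mul (hm : 0 < m) {N : ℕ} (hN : 0 < N) :
    Tendsto (fun n => Hblock x m n - Hblock x m (n / N * N)) atTop (𝓝 0) := by
  have := (uniformContinuousOn_ent2 (β := Fin m → 𝒳)).tendsto_dist_comp (blockDist_mem_Icc x m)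
    (fun n => blockDist_mem_Icc x m (n / N * N)) (tendsto_dist_blockDist_div_mul x m hm hN)
  rw [tendsto_iff_norm_sub_tendsto_zero]
  simpa only [sub_zero, Real.norm_eq_abs, Real.dist_eq, Hblock] using this

end BlockEntropy

/-- Identity used in the proof of the paper's Theorem 3: the limsup and liminf of the
`m`-th order block-by-block empirical entropy are unchanged when computed only along the
arithmetic subsequence of times `n = k·N`. -/
theorem Hblock_along_multiples {𝒳 : Type*} [Fintype 𝒳] [DecidableEq 𝒳] (x : ℕ → 𝒳)
    (m N : ℕ) (hm : 1 ≤ m) (hN : 1 ≤ N) :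
    (limsup (fun n : ℕ => Hblock x m n) atTop
      = limsup (fun k : ℕ => Hblock x m (k * N)) atTop)
    ∧ (liminf (fun n : ℕ => Hblock x m n) atTop
      = liminf (fun k : ℕ => Hblock x m (k * N)) atTop) := by
  have hbdd := isBounded_range_Hblock x m
  have hbdd' := hbdd.subset (Set.range_comp_subset_range (fun n => n / N * N) (Hblock x m))
  obtain ⟨hsup, hinf⟩ := limsup_eq_and_liminf_eq_of_tendsto_sub
    (tendsto_Hblock_sub_Hblock_div_mul x m hm hN)
    hbdd.bddAbove.isBoundedUnder_of_range hbdd.bddBelow.isBoundedUnder_of_range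
    hbdd'.bddAbove.isBoundedUnder_of_range hbdd'.bddBelow.isBoundedUnder_of_range
  have hmap : map (· / N) atTop = atTop := map_div_atTop_eq_nat N hN
  refine ⟨hsup.trans ?_, hinf.trans ?_⟩
  · exact (limsup_comp (fun k => Hblock x m (k * N)) (· / N) atTop).trans (by rw [hmap])
  · exact (liminf_comp (fun k => Hblock x m (k * N)) (· / N) atTop).trans (by rw [hmap])
end
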